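/- arXiv:0802.2263 — 6 statements merged into one kernel-verified Lean document; each statement's English description precedes it below -/
import Mathlib

section
/- The two-qubit state ρ_{0+} = (|00⟩⟨00| + |++⟩⟨++|)/2, where |+⟩ = (|0⟩+|1⟩)/√2, has no product eigenbasis: there is no orthonormal basis of ℂ²⊗ℂ² consisting of product vectors |a_j⟩⊗|b_k⟩ that are all eigenvectors of ρ_{0+}. -/
open Matrix Kronecker

noncomputable section

/-- A family of vectors is orthonormal. -/
def OrthonormalFam {κ ι : Type*} [Fintype ι] [DecidableEq κ] (v : κ → ι → ℂ) : Prop :=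
  ∀ j k, ∑ i, star (v j i) * v k i = if j = k then 1 else 0

/-- The rank-one projector `|v⟩⟨v|`. -/
def proj {n : Type*} (v : n → ℂ) : Matrix n n ℂ := fun i j => v i * star (v j)

/-- A bipartite matrix on `ℂ^{dA} ⊗ ℂ^{dB}` has a product eigenbasis if it can be written as
`Σ_{j,k} e_{jk} |v_j^A⟩⟨v_j^A| ⊗ |v_k^B⟩⟨v_k^B|` for orthonormal bases of the local spaces. -/
def HasProductEigenbasis {dA dB : ℕ}
    (ρ : Matrix ((Fin dA) × (Fin dB)) ((Fin dA) × (Fin dB)) ℂ) : Prop :=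
  ∃ (a : Fin dA → Fin dA → ℂ) (b : Fin dB → Fin dB → ℂ) (e : Fin dA → Fin dB → ℝ),
    OrthonormalFam a ∧ OrthonormalFam b ∧
    ρ = ∑ j, ∑ k, ((e j k : ℝ) : ℂ) • (proj (a j) ⊗ₖ proj (b k))

/-- The vector `|0⟩` on one qubit. -/
def ket0 : Fin 2 → ℂ := fun i => if i = 0 then 1 else 0

/-- The vector `|+⟩ = (|0⟩+|1⟩)/√2` on one qubit. -/
def ketPlus : Fin 2 → ℂ := fun _ => ((Real.sqrt 2)⁻¹ : ℝ)

/-- The two-qubit state `ρ_{0+} = (|00⟩⟨00| + |++⟩⟨++|)/2`. -/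
def rhoZeroPlus : Matrix (Fin 2 × Fin 2) (Fin 2 × Fin 2) ℂ :=
  (2 : ℂ)⁻¹ • (proj (fun p => ket0 p.1 * ket0 p.2) + proj (fun p => ketPlus p.1 * ketPlus p.2))

lemma rho_apply (p q : Fin 2 × Fin 2) : rhoZeroPlus p q =
    (2:ℂ)⁻¹ * (if p = (0,0) then 1 else 0) * (if q = (0,0) then 1 else 0) + (8:ℂ)⁻¹ := by
  have h2 : ((Real.sqrt 2 : ℝ) : ℂ)⁻¹ * ((Real.sqrt 2 : ℝ) : ℂ)⁻¹ = (2:ℂ)⁻¹ := by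
    rw [← mul_inv]
    norm_cast
    rw [Real.mul_self_sqrt (by norm_num)]
    norm_num
  simp only [rhoZeroPlus, Matrix.smul_apply, Matrix.add_apply, proj, ket0, ketPlus]
  obtain ⟨p1, p2⟩ := p
  obtain ⟨q1, q2⟩ := q
  push_cast
  fin_cases p1 <;> fin_cases p2 <;> fin_cases q1 <;> fin_cases q2 <;>
    simp [Complex.star_def, Prod.ext_iff] <;> ring_nf <;>
    rw [show ((Real.sqrt 2:ℝ):ℂ)⁻¹^4 = (((Real.sqrt 2:ℝ):ℂ)⁻¹*((Real.sqrt 2:ℝ):ℂ)⁻¹)*(((Real.sqrt 2:ℝ):ℂ)⁻¹*((Real.sqrt 2:ℝ):ℂ)⁻¹) by ring, h2] <;> norm_num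


lemma key (a b : Fin 2 → Fin 2 → ℂ) (e : Fin 2 → Fin 2 → ℝ)
    (ha : OrthonormalFam a) (hb : OrthonormalFam b)
    (hrho : rhoZeroPlus = ∑ j, ∑ k, ((e j k : ℝ) : ℂ) • (proj (a j) ⊗ₖ proj (b k)))
    (J K : Fin 2) (p : Fin 2 × Fin 2) :
    ∑ q : Fin 2 × Fin 2, rhoZeroPlus p q * (a J q.1 * b K q.2)
      = ((e J K : ℝ) : ℂ) * (a J p.1 * b K p.2) := by
  have ha00 := ha 0 0; have ha01 := ha 0 1; have ha10 := ha 1 0; have ha11 := ha 1 1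
  have hb00 := hb 0 0; have hb01 := hb 0 1; have hb10 := hb 1 0; have hb11 := hb 1 1
  simp only [Fin.sum_univ_two, if_true, show ((0:Fin 2) = 1) = False by simp,
    show ((1:Fin 2) = 0) = False by simp, if_false, eq_self_iff_true, if_pos] at ha00 ha01 ha10 ha11 hb00 hb01 hb10 hb11
  rw [hrho]
  rcases (show J = 0 ∨ J = 1 by omega) with rfl | rfl <;>
    rcases (show K = 0 ∨ K = 1 by omega) with rfl | rfl <;>
    simp only [Matrix.sum_apply, Matrix.smul_apply, Matrix.add_apply, kroneckerMap_apply, proj,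
      smul_eq_mul, Fin.sum_univ_two, Fintype.sum_prod_type]
  · linear_combination ((e 0 0 : ℂ) * a 0 p.1 * b 0 p.2 * (star (b 0 0) * b 0 0 + star (b 0 1) * b 0 1)) * ha00 + ((e 0 1 : ℂ) * a 0 p.1 * b 1 p.2 * (star (b 1 0) * b 0 0 + star (b 1 1) * b 0 1)) * ha00 + ((e 1 0 : ℂ) * a 1 p.1 * b 0 p.2 * (star (b 0 0) * b 0 0 + star (b 0 1) * b 0 1)) * ha10 + ((e 1 1 : ℂ) * a 1 p.1 * b 1 p.2 * (star (b 1 0) * b 0 0 + star (b 1 1) * b 0 1)) * ha10 + ((e 0 0 : ℂ) * a 0 p.1 * b 0 p.2) * hb00 + ((e 0 1 : ℂ) * a 0 p.1 * b 1 p.2) * hb10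
  · linear_combination ((e 0 0 : ℂ) * a 0 p.1 * b 0 p.2 * (star (b 0 0) * b 1 0 + star (b 0 1) * b 1 1)) * ha00 + ((e 0 1 : ℂ) * a 0 p.1 * b 1 p.2 * (star (b 1 0) * b 1 0 + star (b 1 1) * b 1 1)) * ha00 + ((e 1 0 : ℂ) * a 1 p.1 * b 0 p.2 * (star (b 0 0) * b 1 0 + star (b 0 1) * b 1 1)) * ha10 + ((e 1 1 : ℂ) * a 1 p.1 * b 1 p.2 * (star (b 1 0) * b 1 0 + star (b 1 1) * b 1 1)) * ha10 + ((e 0 0 : ℂ) * a 0 p.1 * b 0 p.2) * hb01 + ((e 0 1 : ℂ) * a 0 p.1 * b 1 p.2) * hb11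
  · linear_combination ((e 0 0 : ℂ) * a 0 p.1 * b 0 p.2 * (star (b 0 0) * b 0 0 + star (b 0 1) * b 0 1)) * ha01 + ((e 0 1 : ℂ) * a 0 p.1 * b 1 p.2 * (star (b 1 0) * b 0 0 + star (b 1 1) * b 0 1)) * ha01 + ((e 1 0 : ℂ) * a 1 p.1 * b 0 p.2 * (star (b 0 0) * b 0 0 + star (b 0 1) * b 0 1)) * ha11 + ((e 1 1 : ℂ) * a 1 p.1 * b 1 p.2 * (star (b 1 0) * b 0 0 + star (b 1 1) * b 0 1)) * ha11 + ((e 1 0 : ℂ) * a 1 p.1 * b 0 p.2) * hb00 + ((e 1 1 : ℂ) * a 1 p.1 * b 1 p.2) * hb10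
  · linear_combination ((e 0 0 : ℂ) * a 0 p.1 * b 0 p.2 * (star (b 0 0) * b 1 0 + star (b 0 1) * b 1 1)) * ha01 + ((e 0 1 : ℂ) * a 0 p.1 * b 1 p.2 * (star (b 1 0) * b 1 0 + star (b 1 1) * b 1 1)) * ha01 + ((e 1 0 : ℂ) * a 1 p.1 * b 0 p.2 * (star (b 0 0) * b 1 0 + star (b 0 1) * b 1 1)) * ha11 + ((e 1 1 : ℂ) * a 1 p.1 * b 1 p.2 * (star (b 1 0) * b 1 0 + star (b 1 1) * b 1 1)) * ha11 + ((e 1 0 : ℂ) * a 1 p.1 * b 0 p.2) * hb01 + ((e 1 1 : ℂ) * a 1 p.1 * b 1 p.2) * hb11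


/-- The state `ρ_{0+}` has no product eigenbasis. -/
theorem rhoZeroPlus_no_product_eigenbasis : ¬ HasProductEigenbasis rhoZeroPlus := by
  rintro ⟨a, b, e, ha, hb, hrho⟩
  have hzero : ∀ J K : Fin 2, ((e J K : ℝ) : ℂ) = 0 := by
    intro J K
    have h00 := key a b e ha hb hrho J K (0,0)
    have h01 := key a b e ha hb hrho J K (0,1)
    have h10 := key a b e ha hb hrho J K (1,0)
    have h11 := key a b e ha hb hrho J K (1,1)
    simp only [rho_apply, Fintype.sum_prod_type, Fin.sum_univ_two, Prod.mk.injEq] at h00 h01 h10 h11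
    norm_num at h00 h01 h10 h11
    have hA := ha J J
    have hB := hb K K
    simp only [Fin.sum_univ_two, eq_self_iff_true, if_true] at hA hB
    by_contra hE
    have e1 : a J 0 * b K 1 = a J 1 * b K 1 :=
      mul_left_cancel₀ hE (by linear_combination h11 - h01)
    have e2 : a J 1 * b K 0 = a J 1 * b K 1 :=
      mul_left_cancel₀ hE (by linear_combination h11 - h10)
    by_cases ht : a J 1 * b K 1 = 0
    · have hv00 : a J 0 * b K 0 = 0 := by
        linear_combination 8*h11 - e1 - e2 + (8*((e J K : ℝ):ℂ) - 3)*ht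
      have hv01 : a J 0 * b K 1 = 0 := e1.trans ht
      have hv10 : a J 1 * b K 0 = 0 := e2.trans ht
      have hone : (1:ℂ) = 0 := by
        linear_combination (-(star (b K 0) * b K 0 + star (b K 1) * b K 1)) * hA - hB
          + star (a J 0) * star (b K 0) * hv00 + star (a J 0) * star (b K 1) * hv01
          + star (a J 1) * star (b K 0) * hv10 + star (a J 1) * star (b K 1) * ht
      exact one_ne_zero hone
    · have eprod : a J 0 * b K 0 * (a J 1 * b K 1) = a J 0 * b K 1 * (a J 1 * b K 0) := by ring
      have e0 : a J 0 * b K 0 = a J 1 * b K 1 :=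
        mul_right_cancel₀ ht (by linear_combination eprod + (a J 1 * b K 0) * e1 + (a J 1 * b K 1) * e2)
      exact ht (by linear_combination 2*h00 - 2*h01 + (2*((e J K : ℝ):ℂ) - 1)*e0 - 2*((e J K : ℝ):ℂ)*e1)
  have hpt := congrFun (congrFun hrho ((0,0) : Fin 2 × Fin 2)) ((0,0) : Fin 2 × Fin 2)
  rw [rho_apply] at hpt
  simp only [Matrix.sum_apply, Matrix.smul_apply, Fin.sum_univ_two, hzero, zero_smul,
    Matrix.zero_apply, add_zero] at hpt
  norm_num at hpt

end
end

section
/- Let ρ^{AB}_{PE} = Σ_{i,j} c_{ij} |u_i⟩⟨u_i| ⊗ |v_j⟩⟨v_j| be a bipartite density matrix with product eigenbasis, and let f(j) = Σ_k c_{kj}. Then (I⊗Γ_x)ρ^{AB}_{PE} = Σ_{j : f(j)≠0} f(j)^{x-1} Σ_i c_{ij} |u_i⟩⟨u_i| ⊗ |v_j⟩⟨v_j|, where (I⊗Γ_x)ρ = √({ρ[I⊗(Tr_A ρ)^{x-1}]}{h.c.}). -/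
open Matrix Kronecker
open scoped ComplexOrder

noncomputable section

/-- Real power of a positive semidefinite Hermitian matrix via functional calculus, with the
convention `0 ^ y := 0`; non-Hermitian matrices are mapped to the junk value `0`. -/
def matRPow {n : Type*} [Fintype n] [DecidableEq n] (A : Matrix n n ℂ) (y : ℝ) :
    Matrix n n ℂ :=
  if hA : A.IsHermitian then
    (hA.eigenvectorUnitary.1 : Matrix n n ℂ) *
      Matrix.diagonal (fun i =>
        ((if hA.eigenvalues i = 0 then 0 else (hA.eigenvalues i) ^ y : ℝ) : ℂ)) *
      (star hA.eigenvectorUnitary.1 : Matrix n n ℂ)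
  else 0

/-- The partial trace over the first subsystem. -/
def ptrA {nA nB : Type*} [Fintype nA] (ρ : Matrix (nA × nB) (nA × nB) ℂ) : Matrix nB nB ℂ :=
  fun b b' => ∑ a, ρ (a, b) (a, b')

/-- The map `(I⊗Γ_x)(ρ) = √({ρ[I ⊗ (Tr_A ρ)^{x-1}]}{h.c.})` (positive square root). -/
def Gamma {nA nB : Type*} [Fintype nA] [Fintype nB] [DecidableEq nA] [DecidableEq nB]
    (x : ℝ) (ρ : Matrix (nA × nB) (nA × nB) ℂ) : Matrix (nA × nB) (nA × nB) ℂ :=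
  let hA := Matrix.posSemidef_self_mul_conjTranspose
    (ρ * ((1 : Matrix nA nA ℂ) ⊗ₖ matRPow (ptrA ρ) (x - 1)))
  hA.1.eigenvectorUnitary.1 * Matrix.diagonal (fun i => ((Real.sqrt (hA.1.eigenvalues i) : ℝ) : ℂ)) *
    (star hA.1.eigenvectorUnitary : Matrix (nA × nB) (nA × nB) ℂ)

/-! ### Auxiliary lemmas -/

open Polynomial in
lemma conj_aeval {n : Type*} [Fintype n] [DecidableEq n] (U : Matrix n n ℂ)
    (hU : U ∈ Matrix.unitaryGroup n ℂ) (d : n → ℂ) (p : ℂ[X]) :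
    Polynomial.aeval (U * diagonal d * star U) p
      = U * diagonal (fun i => p.eval (d i)) * star U := by
  have hUU : U * star U = 1 := (Matrix.mem_unitaryGroup_iff).mp hU
  have hpow : ∀ k : ℕ, (U * diagonal d * star U) ^ k
      = U * diagonal (fun i => d i ^ k) * star U := by
    intro k; induction k with
    | zero => simp [hUU, Matrix.diagonal_one]
    | succ k ih =>
        rw [pow_succ, ih]
        calc U * diagonal (fun i => d i ^ k) * star U * (U * diagonal d * star U)
            = U * (diagonal (fun i => d i ^ k) * (star U * U) * diagonal d) * star U := by
              noncomm_ring
          _ = U * diagonal (fun i => d i ^ (k+1)) * star U := by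
              rw [Matrix.mem_unitaryGroup_iff'.mp hU, mul_one, Matrix.diagonal_mul_diagonal]
              simp [pow_succ]
  induction p using Polynomial.induction_on' with
  | add f g hf hg =>
      simp only [map_add, hf, hg, eval_add]
      rw [← Matrix.add_mul, ← Matrix.mul_add, ← Matrix.diagonal_add]
  | monomial k a =>
      simp only [aeval_monomial, eval_monomial, hpow]
      rw [show (algebraMap ℂ (Matrix n n ℂ)) a = a • (1 : Matrix n n ℂ) by
        simp [Algebra.algebraMap_eq_smul_one]]
      rw [smul_mul_assoc, one_mul, ← smul_mul_assoc, ← mul_smul_comm]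
      congr 1; congr 1
      ext i j
      by_cases h : i = j <;> simp [Matrix.diagonal_apply, h]

open Polynomial in
lemma matRPow_of_spectral {n : Type*} [Fintype n] [DecidableEq n] (A V : Matrix n n ℂ)
    (hV : V ∈ Matrix.unitaryGroup n ℂ) (e : n → ℝ)
    (hAe : A = V * diagonal (fun i => (e i : ℂ)) * star V) (y : ℝ) :
    matRPow A y = V * diagonal (fun i => ((if e i = 0 then 0 else e i ^ y : ℝ) : ℂ)) * star V := by
  have hD : (diagonal (fun i => (e i : ℂ))).IsHermitian := by
    apply Matrix.isHermitian_diagonal_of_self_adjoint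
    have : star (fun i => ((e i : ℝ) : ℂ)) = fun i => ((e i : ℝ) : ℂ) := by
      funext i; simp [Pi.star_apply, Complex.star_def, Complex.conj_ofReal]
    exact this
  have hA : A.IsHermitian := by
    rw [hAe, Matrix.star_eq_conjTranspose]
    exact Matrix.isHermitian_mul_mul_conjTranspose V hD
  set g : ℝ → ℝ := fun t => if t = 0 then 0 else t ^ y with hg
  set T : Finset ℝ := Finset.univ.image hA.eigenvalues ∪ Finset.univ.image e with hT
  have hinj : Set.InjOn (fun t : ℝ => (t : ℂ)) T := fun a _ b _ h =>
    Complex.ofReal_inj.mp (by simpa using h)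
  set p : ℂ[X] := Lagrange.interpolate T (fun t : ℝ => (t : ℂ)) (fun t => ((g t : ℝ) : ℂ)) with hp
  have heval : ∀ t ∈ T, p.eval ((t : ℝ) : ℂ) = ((g t : ℝ) : ℂ) := fun t ht =>
    Lagrange.eval_interpolate_at_node _ hinj ht
  have h1 : Polynomial.aeval A p
      = (hA.eigenvectorUnitary.1 : Matrix n n ℂ) *
        diagonal (fun i => ((g (hA.eigenvalues i) : ℝ) : ℂ)) *
        (star hA.eigenvectorUnitary.1 : Matrix n n ℂ) := by
    conv_lhs => rw [hA.spectral_theorem]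
    rw [Unitary.conjStarAlgAut_apply, conj_aeval _ hA.eigenvectorUnitary.2]
    have hfun : (fun i => p.eval ((RCLike.ofReal ∘ hA.eigenvalues) i))
        = fun i => ((g (hA.eigenvalues i) : ℝ) : ℂ) := funext fun i =>
      heval _ (Finset.mem_union_left _ (Finset.mem_image_of_mem _ (Finset.mem_univ i)))
    rw [hfun]
  have h2 : Polynomial.aeval A p
      = V * diagonal (fun i => ((g (e i) : ℝ) : ℂ)) * star V := by
    conv_lhs => rw [hAe]
    rw [conj_aeval _ hV]
    have hfun : (fun i => p.eval ((e i : ℝ) : ℂ))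
        = fun i => ((g (e i) : ℝ) : ℂ) := funext fun i =>
      heval _ (Finset.mem_union_right _ (Finset.mem_image_of_mem _ (Finset.mem_univ i)))
    rw [hfun]
  rw [matRPow, dif_pos hA]
  calc _ = Polynomial.aeval A p := h1.symm
    _ = _ := h2

lemma proj_mul_proj {κ n : Type*} [Fintype n] [DecidableEq κ] (w : κ → n → ℂ)
    (hw : OrthonormalFam w) (i k : κ) :
    proj (w i) * proj (w k) = if i = k then proj (w i) else 0 := by
  ext p q
  simp only [Matrix.mul_apply, proj]
  have h : ∑ r, w i p * star (w i r) * (w k r * star (w k q))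
      = (∑ r, star (w i r) * w k r) * (w i p * star (w k q)) := by
    rw [Finset.sum_mul]; exact Finset.sum_congr rfl fun r _ => by ring
  rw [h, hw i k]
  split_ifs with hik
  · subst hik; simp [proj]
  · simp

lemma kron_proj_mul {nA nB : Type*} [Fintype nA] [Fintype nB] [DecidableEq nA] [DecidableEq nB]
    (u : nA → nA → ℂ) (v : nB → nB → ℂ) (hu : OrthonormalFam u) (hv : OrthonormalFam v)
    (i : nA) (j : nB) (k : nA) (l : nB) :
    (proj (u i) ⊗ₖ proj (v j)) * (proj (u k) ⊗ₖ proj (v l))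
      = if i = k ∧ j = l then proj (u i) ⊗ₖ proj (v j) else 0 := by
  rw [← Matrix.mul_kronecker_mul, proj_mul_proj u hu, proj_mul_proj v hv]
  by_cases h1 : i = k <;> by_cases h2 : j = l <;> simp [h1, h2]

lemma kron_proj_herm {nA nB : Type*} (a : nA → ℂ) (b : nB → ℂ) :
    (proj a ⊗ₖ proj b)ᴴ = proj a ⊗ₖ proj b := by
  ext ⟨p, q⟩ ⟨p', q'⟩
  simp [Matrix.conjTranspose_apply, proj, Matrix.kroneckerMap_apply]
  ring

lemma sum2_smul_mul_sum2 {ιA ιB N : Type*} [Fintype ιA] [Fintype ιB] [DecidableEq ιA]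
    [DecidableEq ιB] [Fintype N]
    (R : ιA → ιB → Matrix N N ℂ)
    (hR : ∀ i j k l, R i j * R k l = if i = k ∧ j = l then R i j else 0)
    (a b : ιA → ιB → ℂ) :
    (∑ i, ∑ j, a i j • R i j) * (∑ k, ∑ l, b k l • R k l)
      = ∑ i, ∑ j, (a i j * b i j) • R i j := by
  simp only [Finset.sum_mul, Finset.mul_sum, smul_mul_smul_comm, hR]
  refine Finset.sum_congr rfl fun i _ => Finset.sum_congr rfl fun j _ => ?_
  rw [Finset.sum_comm]
  simp [Finset.sum_ite_eq', ite_and, smul_ite]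

lemma sum2_smul_mul_sum1 {ιA ιB N : Type*} [Fintype ιA] [Fintype ιB] [DecidableEq ιA]
    [DecidableEq ιB] [Fintype N]
    (R : ιA → ιB → Matrix N N ℂ) (K : ιB → Matrix N N ℂ)
    (hR : ∀ i j l, R i j * K l = if j = l then R i j else 0)
    (a : ιA → ιB → ℂ) (b : ιB → ℂ) :
    (∑ i, ∑ j, a i j • R i j) * (∑ l, b l • K l)
      = ∑ i, ∑ j, (a i j * b j) • R i j := by
  simp only [Finset.sum_mul, Finset.mul_sum, smul_mul_smul_comm, hR, smul_ite, smul_zero,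
    Finset.sum_ite_eq', Finset.mem_univ, if_true]
  exact Finset.sum_comm

lemma posSemidef_sum {N ι : Type*} [Fintype ι] [Fintype N]
    (M : ι → Matrix N N ℂ) (h : ∀ i, (M i).PosSemidef) :
    (∑ i, M i).PosSemidef := by
  refine Finset.sum_induction M Matrix.PosSemidef (fun a b ha hb => ha.add hb) ?_ (fun i _ => h i)
  simpa using Matrix.posSemidef_self_mul_conjTranspose (0 : Matrix N N ℂ)

lemma conj_diag_eq_sum {n : Type*} [Fintype n] [DecidableEq n]
    (v : n → n → ℂ) (d : n → ℂ) :
    (Matrix.of fun b j => v j b) * diagonal d *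
        star (Matrix.of fun b j => v j b)
      = ∑ j, d j • proj (v j) := by
  ext b b'
  simp only [Matrix.mul_apply, Matrix.mul_diagonal, Matrix.star_eq_conjTranspose,
    Matrix.conjTranspose_apply, Matrix.of_apply, Matrix.sum_apply, Matrix.smul_apply, proj,
    smul_eq_mul, Matrix.diagonal_apply, mul_ite, mul_zero, ite_mul, zero_mul,
    Finset.sum_ite_eq, Finset.sum_ite_eq', Finset.mem_univ, if_true]
  exact Finset.sum_congr rfl fun j _ => by ring

/-- For `ρ = Σ_{i,j} c_{ij} |u_i⟩⟨u_i| ⊗ |v_j⟩⟨v_j|` with product eigenbasis and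
`f(j) = Σ_k c_{kj}`, we have
`(I⊗Γ_x)ρ = Σ_{j : f(j)≠0} f(j)^{x-1} Σ_i c_{ij} |u_i⟩⟨u_i| ⊗ |v_j⟩⟨v_j|`. -/
theorem Gamma_of_productEigenbasis {dA dB : ℕ} (x : ℝ)
    (u : Fin dA → Fin dA → ℂ) (v : Fin dB → Fin dB → ℂ)
    (hu : OrthonormalFam u) (hv : OrthonormalFam v)
    (c : Fin dA → Fin dB → ℝ) (hc : ∀ i j, 0 ≤ c i j) (hc1 : ∑ i, ∑ j, c i j = 1)
    (ρ : Matrix ((Fin dA) × (Fin dB)) ((Fin dA) × (Fin dB)) ℂ)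
    (hρ : ρ = ∑ i, ∑ j, ((c i j : ℝ) : ℂ) • (proj (u i) ⊗ₖ proj (v j)))
    (f : Fin dB → ℝ) (hf : ∀ j, f j = ∑ k, c k j) :
    Gamma x ρ =
      ∑ j, ∑ i, (((if f j = 0 then 0 else (f j) ^ (x - 1)) * c i j : ℝ) : ℂ) •
        (proj (u i) ⊗ₖ proj (v j)) := by
  classical
  have hfnn : ∀ j, 0 ≤ f j := fun j => by
    rw [hf j]; exact Finset.sum_nonneg fun k _ => hc k j
  set g : ℝ → ℝ := fun t => if t = 0 then 0 else t ^ (x - 1) with hgdef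
  have hgnn : ∀ j, 0 ≤ g (f j) := fun j => by
    rw [hgdef]; dsimp only
    split_ifs with h
    · exact le_refl 0
    · exact Real.rpow_nonneg (hfnn j) _
  -- the unitary built from the `v` family
  set V : Matrix (Fin dB) (Fin dB) ℂ := Matrix.of (fun b j => v j b) with hVdef
  have hV : V ∈ Matrix.unitaryGroup (Fin dB) ℂ := by
    rw [Matrix.mem_unitaryGroup_iff']
    ext j k
    have h1 : (star V * V) j k = ∑ b, star (v j b) * v k b := by
      simp [hVdef, Matrix.mul_apply, Matrix.star_eq_conjTranspose, Matrix.conjTranspose_apply]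
    rw [h1, hv j k, Matrix.one_apply]
  -- the partial trace
  have key : ∀ i : Fin dA, ∑ a, u i a * star (u i a) = 1 := fun i => by
    have h := hu i i
    simp only [if_pos] at h
    rw [← h]
    exact Finset.sum_congr rfl fun a _ => by ring
  have hptr : ptrA ρ = V * diagonal (fun j => ((f j : ℝ) : ℂ)) * star V := by
    rw [hVdef, conj_diag_eq_sum]
    ext b b'
    have expand : ∀ a : Fin dA, ρ (a, b) (a, b')
        = ∑ i, ∑ j, ((c i j : ℝ) : ℂ) * ((u i a * star (u i a)) * (v j b * star (v j b'))) := by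
      intro a
      rw [hρ]
      simp only [Matrix.sum_apply, Matrix.smul_apply, Matrix.kroneckerMap_apply, proj,
        smul_eq_mul]
      try exact Finset.sum_congr rfl fun i _ => Finset.sum_congr rfl fun j _ => by ring
    calc (ptrA ρ) b b' = ∑ a, ρ (a, b) (a, b') := rfl
      _ = ∑ a, ∑ i, ∑ j, ((c i j : ℝ) : ℂ)
            * ((u i a * star (u i a)) * (v j b * star (v j b'))) :=
          Finset.sum_congr rfl fun a _ => expand a
      _ = ∑ i, ∑ j, (∑ a, u i a * star (u i a))
            * (((c i j : ℝ) : ℂ) * (v j b * star (v j b'))) := by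
          rw [Finset.sum_comm]
          refine Finset.sum_congr rfl fun i _ => ?_
          rw [Finset.sum_comm]
          refine Finset.sum_congr rfl fun j _ => ?_
          rw [Finset.sum_mul]
          exact Finset.sum_congr rfl fun a _ => by ring
      _ = ∑ j, ((f j : ℝ) : ℂ) * (v j b * star (v j b')) := by
          rw [Finset.sum_comm]
          refine Finset.sum_congr rfl fun j _ => ?_
          simp only [key, one_mul]
          rw [← Finset.sum_mul, hf j]
          push_cast
          ring
      _ = (∑ j, ((f j : ℝ) : ℂ) • proj (v j)) b b' := by
          simp only [Matrix.sum_apply, Matrix.smul_apply, proj, smul_eq_mul]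
  -- the conditional power of the partial trace
  have hS : matRPow (ptrA ρ) (x - 1) = ∑ j, ((g (f j) : ℝ) : ℂ) • proj (v j) := by
    rw [matRPow_of_spectral (ptrA ρ) V hV f hptr (x - 1), hVdef, conj_diag_eq_sum]
  -- the Kronecker product with the identity
  have hkron : (1 : Matrix (Fin dA) (Fin dA) ℂ) ⊗ₖ matRPow (ptrA ρ) (x - 1)
      = ∑ l, ((g (f l) : ℝ) : ℂ)
          • ((1 : Matrix (Fin dA) (Fin dA) ℂ) ⊗ₖ proj (v l)) := by
    rw [hS]
    ext ⟨a, b⟩ ⟨a', b'⟩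
    simp only [Matrix.kroneckerMap_apply, Matrix.sum_apply, Matrix.smul_apply, smul_eq_mul,
      Finset.mul_sum]
    exact Finset.sum_congr rfl fun l _ => by ring
  have hRK : ∀ (i : Fin dA) (j l : Fin dB),
      (proj (u i) ⊗ₖ proj (v j)) * ((1 : Matrix (Fin dA) (Fin dA) ℂ) ⊗ₖ proj (v l))
        = if j = l then proj (u i) ⊗ₖ proj (v j) else 0 := by
    intro i j l
    rw [← Matrix.mul_kronecker_mul, Matrix.mul_one, proj_mul_proj v hv]
    split_ifs <;> simp
  have hRmul := kron_proj_mul u v hu hv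
  -- the matrix inside the square root
  set N : Matrix (Fin dA × Fin dB) (Fin dA × Fin dB) ℂ :=
    ρ * ((1 : Matrix (Fin dA) (Fin dA) ℂ) ⊗ₖ matRPow (ptrA ρ) (x - 1)) with hNdef
  have hNsum : N = ∑ i, ∑ j, ((c i j * g (f j) : ℝ) : ℂ) • (proj (u i) ⊗ₖ proj (v j)) := by
    rw [hNdef, hkron, hρ, sum2_smul_mul_sum1 _ _ hRK]
    refine Finset.sum_congr rfl fun i _ => Finset.sum_congr rfl fun j _ => ?_
    congr 1
    push_cast
    ring
  have hNherm : Nᴴ = N := by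
    rw [hNsum]
    simp only [Matrix.conjTranspose_sum, Matrix.conjTranspose_smul, kron_proj_herm,
      Complex.star_def, Complex.conj_ofReal]
  -- the claimed square root
  set B : Matrix (Fin dA × Fin dB) (Fin dA × Fin dB) ℂ :=
    ∑ j, ∑ i, ((g (f j) * c i j : ℝ) : ℂ) • (proj (u i) ⊗ₖ proj (v j)) with hBdef
  have hBswap : B = ∑ i, ∑ j, ((g (f j) * c i j : ℝ) : ℂ) • (proj (u i) ⊗ₖ proj (v j)) :=
    Finset.sum_comm
  have hBsq : B ^ 2 = N * Nᴴ := by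
    rw [hNherm, pow_two, hBswap, hNsum, sum2_smul_mul_sum2 _ hRmul, sum2_smul_mul_sum2 _ hRmul]
    refine Finset.sum_congr rfl fun i _ => Finset.sum_congr rfl fun j _ => ?_
    congr 1
    push_cast
    ring
  have hBpsd : B.PosSemidef := by
    rw [hBdef]
    refine _root_.posSemidef_sum _ fun j => _root_.posSemidef_sum _ fun i => ?_
    have hr : (0 : ℝ) ≤ g (f j) * c i j := mul_nonneg (hgnn j) (hc i j)
    have hfact : ((g (f j) * c i j : ℝ) : ℂ) • (proj (u i) ⊗ₖ proj (v j))
        = (((Real.sqrt (g (f j) * c i j) : ℝ) : ℂ) • (proj (u i) ⊗ₖ proj (v j)))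
          * (((Real.sqrt (g (f j) * c i j) : ℝ) : ℂ) • (proj (u i) ⊗ₖ proj (v j)))ᴴ := by
      rw [Matrix.conjTranspose_smul, kron_proj_herm, smul_mul_smul_comm,
        hRmul i j i j]
      simp only [and_self, if_true, Complex.star_def, Complex.conj_ofReal]
      rw [← Complex.ofReal_mul, Real.mul_self_sqrt hr]
    rw [hfact]
    exact Matrix.posSemidef_self_mul_conjTranspose _
  have hNN : (N * Nᴴ).IsHermitian := (Matrix.posSemidef_self_mul_conjTranspose N).1
  have hfinal : B = cfc Real.sqrt (N * Nᴴ) := by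
    rw [← hBsq, ← cfc_comp_pow Real.sqrt 2 B Real.continuous_sqrt.continuousOn
      hBpsd.1.isSelfAdjoint]
    rw [cfc_congr (g := fun t : ℝ => t) ?_, cfc_id' (R := ℝ) (a := B) hBpsd.1.isSelfAdjoint]
    intro t ht
    rw [hBpsd.1.spectrum_real_eq_range_eigenvalues] at ht
    obtain ⟨k, rfl⟩ := ht
    exact Real.sqrt_sq (hBpsd.eigenvalues_nonneg k)
  have hG : Gamma x ρ = B := by
    rw [hfinal, hNN.cfc_eq, Matrix.IsHermitian.cfc, Unitary.conjStarAlgAut_apply]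
    rfl
  exact hG

end
end

section
/- Any linear eigenvalue-preserving map Λ on d×d density matrices (a map sending every rank-one projector from any orthonormal basis to a rank-one projector, such that every orthonormal basis of projectors is mapped bijectively to another orthonormal basis of projectors) preserves the modulus of inner products: for all unit vectors x, y, if Λ(|x⟩⟨x|) = |x'⟩⟨x'| and Λ(|y⟩⟨y|) = |y'⟩⟨y'|, then |⟨x|y⟩| = |⟨x'|y'⟩|. Consequently, by Wigner's theorem, Λ is implemented by a unitary or an antiunitary transformation, i.e., Λ(ρ) = UρU† or Λ(ρ) = Uρ^T U† for some unitary U. -/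
open Matrix

noncomputable section

namespace WignerAux

variable {d : ℕ}

/-- inner product -/
def ip (x y : Fin d → ℂ) : ℂ := ∑ i, star (x i) * y i

/-- outer product |x⟩⟨y| -/
def outer (x y : Fin d → ℂ) : Matrix (Fin d) (Fin d) ℂ := fun i j => x i * star (y j)

lemma proj_eq_outer (x : Fin d → ℂ) : proj x = outer x x := rfl

lemma outer_mul_outer (x y z w : Fin d → ℂ) :
    outer x y * outer z w = ip y z • outer x w := by
  ext i j
  simp only [Matrix.mul_apply, outer, ip, Matrix.smul_apply, smul_eq_mul, Finset.sum_mul,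
    Finset.mul_sum]
  apply Finset.sum_congr rfl
  intro l _
  ring

lemma trace_outer (x y : Fin d → ℂ) : (outer x y).trace = ip y x := by
  simp only [Matrix.trace, Matrix.diag, outer, ip]
  apply Finset.sum_congr rfl
  intro l _
  ring

lemma ip_conj (x y : Fin d → ℂ) : ip y x = star (ip x y) := by
  simp only [ip, star_sum, star_mul', star_star]
  apply Finset.sum_congr rfl; intro l _; ring

lemma onf_ip {v : Fin d → Fin d → ℂ} (hv : OrthonormalFam v) (j k : Fin d) :
    ip (v j) (v k) = if j = k then 1 else 0 := hv j k

lemma proj_isHermitian (x : Fin d → ℂ) : (proj x).IsHermitian := by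
  ext i j
  simp only [conjTranspose_apply, proj, star_mul', star_star]
  ring

lemma trace_proj (x : Fin d → ℂ) : (proj x).trace = ip x x := by
  rw [proj_eq_outer, trace_outer]

lemma trace_proj_mul_proj (x y : Fin d → ℂ) :
    (proj x * proj y).trace = ip x y * star (ip x y) := by
  rw [proj_eq_outer, proj_eq_outer, outer_mul_outer, trace_smul, trace_outer, smul_eq_mul,
    ip_conj x y]

/-- completeness of orthonormal families (square case) -/
lemma onf_complete {v : Fin d → Fin d → ℂ} (hv : OrthonormalFam v) :
    ∑ k, proj (v k) = (1 : Matrix (Fin d) (Fin d) ℂ) := by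
  -- matrix V with V k i = v k i satisfies V ⬝ Vᴴ = 1, hence Vᴴ ⬝ V = 1
  set V : Matrix (Fin d) (Fin d) ℂ := Matrix.of (fun k i => v k i) with hV
  have h1 : V * Vᴴ = 1 := by
    ext j k
    simp only [Matrix.mul_apply, conjTranspose_apply, Matrix.one_apply, hV, Matrix.of_apply]
    have := hv k j
    -- ∑ i, star (v k i) * v j i = if k = j then 1 else 0
    calc ∑ i, v j i * star (v k i) = ∑ i, star (v k i) * v j i := by
          apply Finset.sum_congr rfl; intro l _; ring
      _ = if k = j then 1 else 0 := hv k j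
      _ = if j = k then 1 else 0 := by by_cases h : j = k <;> simp [h, Ne.symm, eq_comm]
  have h2 : Vᴴ * V = 1 := mul_eq_one_comm.mp h1
  ext i m
  have := congrFun (congrFun h2 i) m
  simp only [Matrix.mul_apply, conjTranspose_apply, hV, Matrix.of_apply] at h2
  calc (∑ k, proj (v k)) i m = ∑ k, v k i * star (v k m) := by
        simp [proj, Matrix.sum_apply]
    _ = star ((Vᴴ * V) i m) := by
        simp only [Matrix.mul_apply, conjTranspose_apply, hV, Matrix.of_apply, star_sum,
          star_mul', star_star]
    _ = (1 : Matrix (Fin d) (Fin d) ℂ) i m := by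
        rw [h2]
        by_cases h : i = m <;> simp [Matrix.one_apply, h]

/-- expansion of any vector in an orthonormal family -/
lemma onf_expand {v : Fin d → Fin d → ℂ} (hv : OrthonormalFam v) (u : Fin d → ℂ) (i : Fin d) :
    u i = ∑ k, ip (v k) u * v k i := by
  have h := onf_complete hv
  have := congrFun (congrFun h i)
  calc u i = ∑ j, (1 : Matrix (Fin d) (Fin d) ℂ) i j * u j := by
        simp [Matrix.one_apply]
    _ = ∑ j, (∑ k, proj (v k)) i j * u j := by rw [h]
    _ = ∑ k, ip (v k) u * v k i := by
        simp only [Matrix.sum_apply, proj, Finset.sum_mul, ip]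
        rw [Finset.sum_comm]
        apply Finset.sum_congr rfl; intro k _
        apply Finset.sum_congr rfl; intro j _
        ring

end WignerAux
section
variable {d : ℕ}
open WignerAux

lemma real_smul_matrix (r : ℝ) (M : Matrix (Fin d) (Fin d) ℂ) :
    r • M = (r : ℂ) • M := by
  ext i j
  simp [Complex.real_smul]

/-- spectral decomposition in our language -/
lemma spectral (A : Matrix (Fin d) (Fin d) ℂ) (hA : A.IsHermitian) :
    ∃ (v : Fin d → Fin d → ℂ) (lam : Fin d → ℝ), OrthonormalFam v ∧
      A = ∑ k, (lam k : ℝ) • proj (v k) := by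
  set V : Matrix (Fin d) (Fin d) ℂ := (Matrix.IsHermitian.eigenvectorUnitary hA : Matrix (Fin d) (Fin d) ℂ)
  refine ⟨fun k i => V i k, hA.eigenvalues, ?_, ?_⟩
  · intro j k
    have h : Vᴴ * V = 1 := by
      have := (Matrix.mem_unitaryGroup_iff').mp (Matrix.IsHermitian.eigenvectorUnitary hA).2
      simpa [Matrix.star_eq_conjTranspose] using this
    have := congrFun (congrFun h j) k
    simpa [Matrix.mul_apply, Matrix.conjTranspose_apply, Matrix.one_apply] using this
  · have h := hA.spectral_theorem
    rw [Unitary.conjStarAlgAut_apply] at h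
    ext i m
    conv_lhs => rw [h]
    simp only [Matrix.sum_apply, real_smul_matrix, Matrix.smul_apply, proj, smul_eq_mul]
    rw [Matrix.mul_assoc, Matrix.mul_apply]
    apply Finset.sum_congr rfl
    intro k _
    rw [Matrix.diagonal_mul]
    simp only [Function.comp, Matrix.star_apply, RCLike.ofReal_alg, smul_eq_mul, mul_one,
      Complex.real_smul, Complex.coe_algebraMap, V]
    ring
end
section
variable {d : ℕ}
open WignerAux

lemma onf_sum_sq {v : Fin d → Fin d → ℂ} (hv : OrthonormalFam v) (lam : Fin d → ℝ) :
    (∑ k, (lam k : ℝ) • proj (v k)) * (∑ k, (lam k : ℝ) • proj (v k))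
      = ∑ k, ((lam k * lam k : ℝ)) • proj (v k) := by
  simp only [Finset.sum_mul, Finset.mul_sum, real_smul_matrix, smul_mul_assoc, mul_smul_comm,
    proj_eq_outer, outer_mul_outer, onf_ip hv]
  simp only [smul_ite, smul_zero, ite_smul, zero_smul, Finset.sum_ite_eq, Finset.sum_ite_eq', Finset.mem_univ,
    if_true, smul_smul]
  apply Finset.sum_congr rfl
  intro k _
  push_cast
  ring_nf

variable (Λ : Matrix (Fin d) (Fin d) ℂ →ₗ[ℝ] Matrix (Fin d) (Fin d) ℂ)
  (hEP : ∀ v : Fin d → Fin d → ℂ, OrthonormalFam v →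
      ∃ v' : Fin d → Fin d → ℂ, OrthonormalFam v' ∧ ∀ k, Λ (proj (v k)) = proj (v' k))

include hEP

lemma trace_and_jordan (A : Matrix (Fin d) (Fin d) ℂ) (hA : A.IsHermitian) :
    (Λ A).trace = A.trace ∧ Λ (A * A) = Λ A * Λ A := by
  obtain ⟨v, lam, hv, hdec⟩ := spectral A hA
  obtain ⟨v', hv', himg⟩ := hEP v hv
  have hΛA : Λ A = ∑ k, (lam k : ℝ) • proj (v' k) := by
    rw [hdec, map_sum]
    apply Finset.sum_congr rfl
    intro k _
    rw [_root_.map_smul, himg]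
  constructor
  · rw [hΛA, hdec]
    simp [Matrix.trace_sum, Matrix.trace_smul, trace_proj, onf_ip hv, onf_ip hv']
  · have h1 : A * A = ∑ k, ((lam k * lam k : ℝ)) • proj (v k) := by
      rw [hdec, onf_sum_sq hv]
    rw [h1, map_sum, hΛA, onf_sum_sq hv']
    apply Finset.sum_congr rfl
    intro k _
    rw [_root_.map_smul, himg]

lemma jordan_mul {A B : Matrix (Fin d) (Fin d) ℂ} (hA : A.IsHermitian) (hB : B.IsHermitian) :
    Λ (A * B + B * A) = Λ A * Λ B + Λ B * Λ A := by
  have hsq := fun (C : Matrix (Fin d) (Fin d) ℂ) hC => (trace_and_jordan Λ hEP C hC).2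
  have e1 : Λ (A*A) + (Λ (A*B) + Λ (B*A)) + Λ (B*B)
      = Λ A * Λ A + (Λ A * Λ B + Λ B * Λ A) + Λ B * Λ B := by
    have h2 : (A+B)*(A+B) = A*A + (A*B + B*A) + B*B := by noncomm_ring
    have h3 := hsq (A+B) (hA.add hB)
    rw [h2, map_add, map_add, map_add] at h3
    rw [h3]
    rw [map_add]
    noncomm_ring
  rw [hsq A hA, hsq B hB] at e1
  rw [map_add]
  exact add_left_cancel (add_right_cancel e1)

lemma trace_pres (A : Matrix (Fin d) (Fin d) ℂ) (hA : A.IsHermitian) :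
    (Λ A).trace = A.trace := (trace_and_jordan Λ hEP A hA).1

lemma trace_mul_pres {A B : Matrix (Fin d) (Fin d) ℂ} (hA : A.IsHermitian) (hB : B.IsHermitian) :
    (Λ A * Λ B).trace = (A * B).trace := by
  have hABherm : (A * B + B * A).IsHermitian := by
    rw [Matrix.IsHermitian, conjTranspose_add, conjTranspose_mul, conjTranspose_mul,
      hA.eq, hB.eq, add_comm]
  have h := congrArg Matrix.trace (jordan_mul Λ hEP hA hB)
  rw [trace_pres Λ hEP _ hABherm] at h
  rw [Matrix.trace_add, Matrix.trace_add, Matrix.trace_mul_comm B A,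
    Matrix.trace_mul_comm (Λ B) (Λ A), ← two_mul, ← two_mul] at h
  exact (mul_left_cancel₀ two_ne_zero h).symm

lemma modulus_pres {x y x' y' : Fin d → ℂ}
    (hx : Λ (proj x) = proj x') (hy : Λ (proj y) = proj y') :
    ‖ip x y‖ = ‖ip x' y'‖ := by
  have h := trace_mul_pres Λ hEP (proj_isHermitian x) (proj_isHermitian y)
  rw [hx, hy, trace_proj_mul_proj, trace_proj_mul_proj] at h
  have h2 : (Complex.normSq (ip x' y') : ℂ) = (Complex.normSq (ip x y) : ℂ) := by
    rw [← Complex.mul_conj, ← Complex.mul_conj]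
    exact h
  rw [Complex.ofReal_inj] at h2
  rw [Complex.norm_def, Complex.norm_def, h2]

end
namespace WignerAux
variable {d : ℕ}

/-- standard basis vector -/
def e (k : Fin d) : Fin d → ℂ := fun i => if i = k then 1 else 0

lemma star_e (k i : Fin d) : star (e k i) = e k i := by
  simp only [e, apply_ite (star : ℂ → ℂ), star_one, star_zero]

lemma ip_e_apply (l : Fin d) (x : Fin d → ℂ) : ip (e l) x = x l := by
  rw [ip, Finset.sum_eq_single l]
  · simp [e]
  · intro b _ hb; simp [e, hb]
  · simp

lemma ip_e_e (j k : Fin d) : ip (e j) (e k) = if j = k then 1 else 0 := by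
  rw [ip_e_apply]; simp [e, eq_comm]

lemma onf_e : OrthonormalFam (e (d := d)) := fun j k => ip_e_e j k

/-- Hermitian basis matrices -/
def Hm (j k : Fin d) : Matrix (Fin d) (Fin d) ℂ := outer (e j) (e k) + outer (e k) (e j)

def Km (j k : Fin d) : Matrix (Fin d) (Fin d) ℂ :=
  Complex.I • (outer (e j) (e k) - outer (e k) (e j))

lemma Hm_herm (j k : Fin d) : (Hm j k).IsHermitian := by
  ext i m
  simp only [Hm, conjTranspose_apply, Matrix.add_apply, outer, star_add, star_mul', star_star,
    star_e]
  ring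

lemma Km_herm (j k : Fin d) : (Km j k).IsHermitian := by
  ext i m
  simp only [Km, conjTranspose_apply, Matrix.smul_apply, Matrix.sub_apply, outer, star_smul,
    star_sub, star_mul', star_star, star_e, Complex.star_def, Complex.conj_I, smul_eq_mul]
  ring

lemma Hm_symm (j k : Fin d) : Hm k j = Hm j k := add_comm _ _

lemma Km_symm (j k : Fin d) : Km k j = - Km j k := by
  simp [Km, smul_sub]

lemma Km_self (j : Fin d) : Km j j = 0 := by simp [Km]

lemma Hm_transpose (j k : Fin d) : (Hm j k)ᵀ = Hm j k := by
  ext i m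
  simp only [Matrix.transpose_apply, Hm, Matrix.add_apply, outer, star_e]
  ring

lemma Km_transpose (j k : Fin d) : (Km j k)ᵀ = - Km j k := by
  ext i m
  simp only [Matrix.transpose_apply, Km, Matrix.neg_apply, Matrix.smul_apply, Matrix.sub_apply,
    outer, star_e, smul_eq_mul]
  ring

/-- products of outer products of basis vectors -/
lemma Hm_mul_Hm {j l k : Fin d} (hjl : j ≠ l) (hlk : l ≠ k) (hjk : j ≠ k) :
    Hm j l * Hm l k + Hm l k * Hm j l = Hm j k := by
  simp only [Hm, add_mul, mul_add, outer_mul_outer, ip_e_e, if_pos rfl, if_neg hlk,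
    if_neg (Ne.symm hjl), if_neg hjl, if_neg (Ne.symm hlk), if_neg hjk, if_neg (Ne.symm hjk),
    eq_self_iff_true, if_true, one_smul, zero_smul]
  abel

lemma Hm_mul_Km {j l k : Fin d} (hjl : j ≠ l) (hlk : l ≠ k) (hjk : j ≠ k) :
    Hm j l * Km l k + Km l k * Hm j l = Km j k := by
  simp only [Hm, Km, add_mul, mul_add, smul_mul_assoc, mul_smul_comm, sub_mul, mul_sub,
    outer_mul_outer, ip_e_e, if_pos rfl, if_neg hlk, if_neg (Ne.symm hjl), if_neg hjl,
    if_neg (Ne.symm hlk), if_neg hjk, if_neg (Ne.symm hjk), eq_self_iff_true, if_true, one_smul, zero_smul]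
  module

lemma Hm_anti_Km {j k : Fin d} (hjk : j ≠ k) :
    Hm j k * Km j k + Km j k * Hm j k = 0 := by
  simp only [Hm, Km, add_mul, mul_add, smul_mul_assoc, mul_smul_comm, sub_mul, mul_sub,
    outer_mul_outer, ip_e_e, if_pos rfl, if_neg hjk, if_neg (Ne.symm hjk), eq_self_iff_true, if_true, one_smul, zero_smul]
  module

end WignerAux
namespace WignerAux
variable {d : ℕ}

/-- 1/√2 as a complex number -/
def rc : ℂ := (Real.sqrt 2 : ℝ)⁻¹

lemma star_rc : star rc = rc := by
  simp [rc, ← Complex.ofReal_inv]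

lemma rc_sq : rc * rc = 2⁻¹ := by
  rw [rc, ← Complex.ofReal_inv, ← Complex.ofReal_mul, ← mul_inv]
  rw [Real.mul_self_sqrt (by norm_num : (2:ℝ) ≥ 0)]
  norm_num

lemma sum_mix (j k : Fin d) (hjk : j ≠ k) (g : Fin d → ℂ)
    (hg : ∀ i, i ≠ j → i ≠ k → g i = 0) : ∑ i, g i = g j + g k := by
  rw [Finset.sum_eq_add_of_mem j k (Finset.mem_univ j) (Finset.mem_univ k) hjk]
  intro i _ hi
  exact hg i hi.1 hi.2

lemma ip_combo {j k : Fin d} (hjk : j ≠ k) (p q p' q' : ℂ) :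
    ∑ i, star (p * e j i + q * e k i) * (p' * e j i + q' * e k i)
      = star p * p' + star q * q' := by
  rw [sum_mix j k hjk _ (fun i hij hik => by simp [e, hij, hik])]
  simp [e, hjk, Ne.symm hjk]

lemma ip_combo_e {j k m' : Fin d} (h1 : m' ≠ j) (h2 : m' ≠ k) (p q : ℂ) :
    ∑ i, star (p * e j i + q * e k i) * e m' i = 0 := by
  rw [Finset.sum_eq_single m']
  · simp [e, h1, h2]
  · intro b _ hb; simp [e, hb]
  · simp

lemma ip_e_combo {j k m : Fin d} (h1 : m ≠ j) (h2 : m ≠ k) (p q : ℂ) :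
    ∑ i, star (e m i) * (p * e j i + q * e k i) = 0 := by
  rw [Finset.sum_eq_single m]
  · simp [e, h1, h2]
  · intro b _ hb; simp [e, hb]
  · simp

/-- a two-dimensional rotation of the standard basis at slots j,k -/
def twoFam (j k : Fin d) (p q p' q' : ℂ) : Fin d → Fin d → ℂ := fun m i =>
  if m = j then p * e j i + q * e k i
  else if m = k then p' * e j i + q' * e k i
  else e m i

lemma onf_two {j k : Fin d} (hjk : j ≠ k) (p q p' q' : ℂ)
    (h11 : star p * p + star q * q = 1) (h22 : star p' * p' + star q' * q' = 1)
    (h12 : star p * p' + star q * q' = 0) (h21 : star p' * p + star q' * q = 0) :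
    OrthonormalFam (twoFam j k p q p' q') := by
  intro m m'
  by_cases hmj : m = j
  · by_cases h'j : m' = j
    · simp only [twoFam, hmj, h'j, eq_self_iff_true, if_true, ip_combo hjk, h11]
    · by_cases h'k : m' = k
      · simp only [twoFam, hmj, h'k, eq_self_iff_true, if_true, if_neg (Ne.symm hjk),
          ip_combo hjk, h12, if_neg hjk]
      · simp only [twoFam, hmj, eq_self_iff_true, if_true, if_neg h'j, if_neg h'k,
          ip_combo_e h'j h'k, if_neg (fun h : j = m' => h'j h.symm)]
  · by_cases hmk : m = k
    · by_cases h'j : m' = j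
      · simp only [twoFam, hmk, h'j, eq_self_iff_true, if_true, if_neg (Ne.symm hjk),
          ip_combo hjk, h21, if_neg (Ne.symm hjk)]
      · by_cases h'k : m' = k
        · simp only [twoFam, hmk, h'k, eq_self_iff_true, if_true, if_neg (Ne.symm hjk),
            ip_combo hjk, h22]
        · simp only [twoFam, hmk, eq_self_iff_true, if_true, if_neg (Ne.symm hjk),
            if_neg h'j, if_neg h'k, ip_combo_e h'j h'k, if_neg (fun h : k = m' => h'k h.symm)]
    · by_cases h'j : m' = j
      · simp only [twoFam, h'j, eq_self_iff_true, if_true, if_neg hmj, if_neg hmk,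
          ip_e_combo hmj hmk, if_neg (fun h : m = j => hmj h)]
      · by_cases h'k : m' = k
        · simp only [twoFam, h'k, eq_self_iff_true, if_true, if_neg hmj, if_neg hmk,
            if_neg (Ne.symm hjk), ip_e_combo hmj hmk, if_neg (fun h : m = k => hmk h)]
        · simp only [twoFam, if_neg hmj, if_neg hmk, if_neg h'j, if_neg h'k]
          exact ip_e_e m m'

lemma onf_bH {j k : Fin d} (hjk : j ≠ k) :
    OrthonormalFam (twoFam j k rc rc rc (-rc)) := by
  apply onf_two hjk
  all_goals simp only [star_rc, star_neg, mul_neg, neg_mul, neg_neg]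
  · linear_combination (2:ℂ) * rc_sq
  · linear_combination (2:ℂ) * rc_sq
  · linear_combination rc_sq - rc_sq
  · linear_combination rc_sq - rc_sq

lemma onf_bK {j k : Fin d} (hjk : j ≠ k) :
    OrthonormalFam (twoFam j k rc (rc * Complex.I) rc (-(rc * Complex.I))) := by
  have hI : Complex.I * Complex.I = -1 := Complex.I_mul_I
  apply onf_two hjk
  all_goals simp only [star_rc, star_neg, star_mul', Complex.star_def, Complex.conj_I,
    mul_neg, neg_mul, neg_neg]
  · linear_combination (1 - Complex.I * Complex.I) * rc_sq + (-(1:ℂ)/2) * hI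
  · linear_combination (1 - Complex.I * Complex.I) * rc_sq + (-(1:ℂ)/2) * hI
  · linear_combination (1 + Complex.I * Complex.I) * rc_sq + ((1:ℂ)/2) * hI
  · linear_combination (1 + Complex.I * Complex.I) * rc_sq + ((1:ℂ)/2) * hI

end WignerAux
section
open WignerAux Complex
variable {d : ℕ}
variable (Λ : Matrix (Fin d) (Fin d) ℂ →ₗ[ℝ] Matrix (Fin d) (Fin d) ℂ)
  (hEP : ∀ v : Fin d → Fin d → ℂ, OrthonormalFam v →
      ∃ v' : Fin d → Fin d → ℂ, OrthonormalFam v' ∧ ∀ k, Λ (proj (v k)) = proj (v' k))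
  {f : Fin d → Fin d → ℂ} (hf : OrthonormalFam f)
  (hPf : ∀ l, Λ (proj (e l)) = proj (f l))

include hEP hf hPf

lemma image_two_combo {j k : Fin d} (hjk : j ≠ k) {b u : Fin d → ℂ}
    (hb : Λ (proj b) = proj u)
    (hzero : ∀ l, l ≠ j → l ≠ k → ip (e l) b = 0) :
    ∃ α β : ℂ, (∀ i, u i = α * f j i + β * f k i) ∧
      α * star α = ip (e j) b * star (ip (e j) b) ∧
      β * star β = ip (e k) b * star (ip (e k) b) := by
  have key : ∀ l, ip (f l) u * star (ip (f l) u) = ip (e l) b * star (ip (e l) b) := by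
    intro l
    have h := trace_mul_pres Λ hEP (proj_isHermitian (e l)) (proj_isHermitian b)
    rw [hPf l, hb, trace_proj_mul_proj, trace_proj_mul_proj] at h
    exact h
  have hvan : ∀ l, l ≠ j → l ≠ k → ip (f l) u = 0 := by
    intro l h1 h2
    have h := key l
    rw [hzero l h1 h2, zero_mul] at h
    exact (CStarRing.mul_star_self_eq_zero_iff _).mp h
  refine ⟨ip (f j) u, ip (f k) u, ?_, key j, key k⟩
  intro i
  rw [onf_expand hf u i, sum_mix j k hjk _ (fun l h1 h2 => by rw [hvan l h1 h2, zero_mul])]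

lemma pairH {j k : Fin d} (hjk : j ≠ k) :
    ∃ s : ℂ, Λ (Hm j k) = s • outer (f j) (f k) + star s • outer (f k) (f j) ∧
      s * star s = 1 := by
  obtain ⟨v', hv', himg⟩ := hEP _ (onf_bH hjk)
  have hbfun : twoFam j k rc rc rc (-rc) j = (fun i => rc * e j i + rc * e k i) := by
    funext i; simp [twoFam]
  have hb : Λ (proj (fun i => rc * e j i + rc * e k i)) = proj (v' j) := by
    rw [← hbfun]; exact himg j
  set b : Fin d → ℂ := fun i => rc * e j i + rc * e k i with hbdef
  have hipj : ip (e j) b = rc := by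
    rw [ip_e_apply]; simp [hbdef, e, hjk, Ne.symm hjk]
  have hipk : ip (e k) b = rc := by
    rw [ip_e_apply]; simp [hbdef, e, hjk, Ne.symm hjk]
  obtain ⟨α, β, hu, hαα, hββ⟩ := image_two_combo Λ hEP hf hPf hjk hb
    (fun l h1 h2 => by rw [ip_e_apply]; simp [hbdef, e, h1, h2])
  rw [hipj, star_rc, rc_sq] at hαα
  rw [hipk, star_rc, rc_sq] at hββ
  have hHdec : Hm j k = (2:ℝ) • proj b - proj (e j) - proj (e k) := by
    ext i m
    simp only [Hm, Matrix.sub_apply, Matrix.smul_apply, Matrix.add_apply, proj, outer, hbdef,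
      star_add, star_mul', star_rc, star_e, Complex.real_smul, Complex.ofReal_ofNat,
      smul_eq_mul]
    linear_combination (-2 * (e j i + e k i) * (e j m + e k m)) * rc_sq
  have hΛH : Λ (Hm j k) = (2:ℝ) • proj (v' j) - proj (f j) - proj (f k) := by
    rw [hHdec, map_sub, map_sub, _root_.map_smul, hb, hPf j, hPf k]
  refine ⟨2 * α * star β, ?_, ?_⟩
  · rw [hΛH]
    ext i m
    simp only [Matrix.sub_apply, Matrix.smul_apply, Matrix.add_apply, proj, outer,
      Complex.real_smul, Complex.ofReal_ofNat, smul_eq_mul, hu i, hu m, star_add, star_mul',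
      star_star, star_ofNat]
    linear_combination (2 * f j i * star (f j m)) * hαα + (2 * f k i * star (f k m)) * hββ
  · simp only [star_mul', star_star, star_ofNat]
    linear_combination (4 * β * star β) * hαα + 2 * hββ

lemma pairK {j k : Fin d} (hjk : j ≠ k) :
    ∃ t : ℂ, Λ (Km j k) = t • outer (f j) (f k) + star t • outer (f k) (f j) ∧
      t * star t = 1 := by
  have hI : Complex.I * Complex.I = -1 := Complex.I_mul_I
  obtain ⟨v', hv', himg⟩ := hEP _ (onf_bK hjk)
  have hbfun : twoFam j k rc (rc * Complex.I) rc (-(rc * Complex.I)) j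
      = (fun i => rc * e j i + rc * Complex.I * e k i) := by
    funext i; simp [twoFam]
  have hb : Λ (proj (fun i => rc * e j i + rc * Complex.I * e k i)) = proj (v' j) := by
    rw [← hbfun]; exact himg j
  set b : Fin d → ℂ := fun i => rc * e j i + rc * Complex.I * e k i with hbdef
  have hipj : ip (e j) b = rc := by
    rw [ip_e_apply]; simp [hbdef, e, hjk, Ne.symm hjk]
  have hipk : ip (e k) b = rc * Complex.I := by
    rw [ip_e_apply]; simp [hbdef, e, hjk, Ne.symm hjk]
  obtain ⟨α, β, hu, hαα, hββ⟩ := image_two_combo Λ hEP hf hPf hjk hb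
    (fun l h1 h2 => by rw [ip_e_apply]; simp [hbdef, e, h1, h2])
  rw [hipj, star_rc, rc_sq] at hαα
  rw [hipk] at hββ
  have hββ2 : β * star β = 2⁻¹ := by
    rw [hββ]
    simp only [star_mul', star_rc, Complex.star_def, Complex.conj_I]
    linear_combination rc_sq - rc * rc * hI
  have hKdec : Km j k = proj (e j) + proj (e k) - (2:ℝ) • proj b := by
    ext i m
    simp only [Km, Matrix.sub_apply, Matrix.smul_apply, Matrix.add_apply, proj, outer, hbdef,
      star_add, star_mul', star_rc, star_e, Complex.real_smul, Complex.ofReal_ofNat,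
      Complex.star_def, Complex.conj_I, smul_eq_mul]
    linear_combination (2 * (e j i + Complex.I * e k i) * (e j m - Complex.I * e k m)) * rc_sq
      + (-(e k i * e k m)) * hI
  have hΛK : Λ (Km j k) = proj (f j) + proj (f k) - (2:ℝ) • proj (v' j) := by
    rw [hKdec, map_sub, map_add, _root_.map_smul, hb, hPf j, hPf k]
  refine ⟨-(2 * α * star β), ?_, ?_⟩
  · rw [hΛK]
    ext i m
    simp only [Matrix.sub_apply, Matrix.smul_apply, Matrix.add_apply, proj, outer,
      Complex.real_smul, Complex.ofReal_ofNat, smul_eq_mul, hu i, hu m, star_add, star_mul',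
      star_star, star_neg, star_ofNat, Matrix.neg_apply]
    linear_combination (-2 * f j i * star (f j m)) * hαα + (-2 * f k i * star (f k m)) * hββ2
  · simp only [star_mul', star_star, star_ofNat, star_neg, neg_mul, mul_neg, neg_neg]
    linear_combination (4 * β * star β) * hαα + 2 * hββ2

end
section
open WignerAux Complex
variable {d : ℕ}

/-- purely imaginary unit from the algebraic relations -/
lemma unit_anti {s t : ℂ} (hs : s * star s = 1) (ht : t * star t = 1)
    (h : s * star t + t * star s = 0) :
    t = Complex.I * s ∨ t = -(Complex.I * s) := by
  set q : ℂ := t * star s with hq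
  have hq1 : q + star q = 0 := by
    simp only [hq, star_mul', star_star]
    linear_combination h
  have hq2 : q * star q = 1 := by
    simp only [hq, star_mul', star_star]
    linear_combination (s * star s) * ht + hs
  have hre : q.re = 0 := by
    have := congrArg Complex.re hq1
    simp only [Complex.add_re, Complex.star_def, Complex.conj_re, Complex.zero_re] at this
    linarith
  have hnq : Complex.normSq q = 1 := by
    have : (Complex.normSq q : ℂ) = 1 := by rw [← Complex.mul_conj]; exact hq2
    exact_mod_cast this
  have him : q.im = 1 ∨ q.im = -1 := by
    apply mul_self_eq_one_iff.mp
    have := Complex.normSq_apply q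
    rw [hnq, hre] at this
    linarith
  have hts : t = q * s := by
    rw [hq]
    linear_combination (-t) * hs
  rcases him with h1 | h1
  · left
    rw [hts]
    congr 1
    apply Complex.ext <;> simp [hre, h1]
  · right
    rw [hts, ← neg_mul]
    congr 1
    apply Complex.ext <;> simp [hre, h1]

variable {f : Fin d → Fin d → ℂ} (hf : OrthonormalFam f)

include hf

lemma trace_outer_mul_outer (a b c dd : Fin d) :
    (outer (f a) (f b) * outer (f c) (f dd)).trace
      = (if b = c then 1 else 0) * (if dd = a then 1 else 0) := by
  rw [outer_mul_outer, trace_smul, trace_outer, smul_eq_mul, onf_ip hf, onf_ip hf]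

lemma coeff_extract {j k : Fin d} (hjk : j ≠ k) (a b : ℂ) :
    ((a • outer (f j) (f k) + b • outer (f k) (f j)) * outer (f k) (f j)).trace = a := by
  rw [add_mul, smul_mul_assoc, smul_mul_assoc, trace_add, trace_smul, trace_smul,
    trace_outer_mul_outer hf, trace_outer_mul_outer hf]
  simp [hjk, Ne.symm hjk]

lemma coeff_extract' {j k : Fin d} (hjk : j ≠ k) (a b : ℂ) :
    ((a • outer (f j) (f k) + b • outer (f k) (f j)) * outer (f j) (f k)).trace = b := by
  rw [add_mul, smul_mul_assoc, smul_mul_assoc, trace_add, trace_smul, trace_smul,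
    trace_outer_mul_outer hf, trace_outer_mul_outer hf]
  simp [hjk, Ne.symm hjk]

end

section
open WignerAux Complex
variable {d : ℕ}
variable (Λ : Matrix (Fin d) (Fin d) ℂ →ₗ[ℝ] Matrix (Fin d) (Fin d) ℂ)
  (f : Fin d → Fin d → ℂ)

/-- coefficient of `Λ (Hm j k)` -/
def Sco (j k : Fin d) : ℂ := (Λ (Hm j k) * outer (f k) (f j)).trace

/-- coefficient of `Λ (Km j k)` -/
def Tco (j k : Fin d) : ℂ := (Λ (Km j k) * outer (f k) (f j)).trace

variable {Λ} {f}
variable (hEP : ∀ v : Fin d → Fin d → ℂ, OrthonormalFam v →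
      ∃ v' : Fin d → Fin d → ℂ, OrthonormalFam v' ∧ ∀ k, Λ (proj (v k)) = proj (v' k))
  (hf : OrthonormalFam f)
  (hPf : ∀ l, Λ (proj (e l)) = proj (f l))

include hEP hf hPf

lemma Sco_spec {j k : Fin d} (hjk : j ≠ k) :
    Λ (Hm j k) = Sco Λ f j k • outer (f j) (f k) + star (Sco Λ f j k) • outer (f k) (f j)
      ∧ Sco Λ f j k * star (Sco Λ f j k) = 1 := by
  obtain ⟨s, hs, hunit⟩ := pairH Λ hEP hf hPf hjk
  have hSs : Sco Λ f j k = s := by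
    rw [Sco, hs, coeff_extract hf hjk]
  rw [hSs]
  exact ⟨hs, hunit⟩

lemma Tco_spec {j k : Fin d} (hjk : j ≠ k) :
    Λ (Km j k) = Tco Λ f j k • outer (f j) (f k) + star (Tco Λ f j k) • outer (f k) (f j)
      ∧ Tco Λ f j k * star (Tco Λ f j k) = 1 := by
  obtain ⟨t, ht, hunit⟩ := pairK Λ hEP hf hPf hjk
  have hTt : Tco Λ f j k = t := by
    rw [Tco, ht, coeff_extract hf hjk]
  rw [hTt]
  exact ⟨ht, hunit⟩

lemma Sco_flip {j k : Fin d} (hjk : j ≠ k) : Sco Λ f k j = star (Sco Λ f j k) := by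
  have h := (Sco_spec hEP hf hPf hjk).1
  rw [Sco, Hm_symm, h, coeff_extract' hf hjk]

lemma Tco_flip {j k : Fin d} (hjk : j ≠ k) : Tco Λ f k j = - star (Tco Λ f j k) := by
  have h := (Tco_spec hEP hf hPf hjk).1
  rw [Tco, Km_symm, map_neg, h, neg_mul, trace_neg, coeff_extract' hf hjk]

lemma Sco_anti {j k : Fin d} (hjk : j ≠ k) :
    Sco Λ f j k * star (Tco Λ f j k) + Tco Λ f j k * star (Sco Λ f j k) = 0 := by
  have h0 : Λ (Hm j k) * Λ (Km j k) + Λ (Km j k) * Λ (Hm j k) = 0 := by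
    rw [← jordan_mul Λ hEP (Hm_herm j k) (Km_herm j k), Hm_anti_Km hjk, map_zero]
  have h1 := congrArg Matrix.trace h0
  rw [(Sco_spec hEP hf hPf hjk).1, (Tco_spec hEP hf hPf hjk).1] at h1
  simp only [add_mul, mul_add, smul_mul_assoc, mul_smul_comm, trace_add, trace_smul,
    trace_outer_mul_outer hf, smul_eq_mul, trace_zero, if_neg hjk, if_neg (Ne.symm hjk),
    eq_self_iff_true, if_true, mul_zero, zero_mul, mul_one, add_zero, zero_add] at h1
  linear_combination h1 / 2

lemma Sco_triple {j l k : Fin d} (hjl : j ≠ l) (hlk : l ≠ k) (hjk : j ≠ k) :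
    Sco Λ f j k = Sco Λ f j l * Sco Λ f l k := by
  have hjord := jordan_mul Λ hEP (Hm_herm j l) (Hm_herm l k)
  rw [Hm_mul_Hm hjl hlk hjk] at hjord
  have hexp : Λ (Hm j l) * Λ (Hm l k) + Λ (Hm l k) * Λ (Hm j l)
      = (Sco Λ f j l * Sco Λ f l k) • outer (f j) (f k)
        + star (Sco Λ f j l * Sco Λ f l k) • outer (f k) (f j) := by
    rw [(Sco_spec hEP hf hPf hjl).1, (Sco_spec hEP hf hPf hlk).1]
    simp only [add_mul, mul_add, smul_mul_assoc, mul_smul_comm, outer_mul_outer, onf_ip hf,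
      if_neg hjl, if_neg (Ne.symm hjl), if_neg hlk, if_neg (Ne.symm hlk), if_neg hjk,
      if_neg (Ne.symm hjk), eq_self_iff_true, if_true, one_smul, zero_smul, smul_zero,
      add_zero, zero_add, smul_smul, star_mul']
    module
  rw [Sco, hjord, hexp, coeff_extract hf hjk]

lemma Tco_triple {j l k : Fin d} (hjl : j ≠ l) (hlk : l ≠ k) (hjk : j ≠ k) :
    Tco Λ f j k = Sco Λ f j l * Tco Λ f l k := by
  have hjord := jordan_mul Λ hEP (Hm_herm j l) (Km_herm l k)
  rw [Hm_mul_Km hjl hlk hjk] at hjord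
  have hexp : Λ (Hm j l) * Λ (Km l k) + Λ (Km l k) * Λ (Hm j l)
      = (Sco Λ f j l * Tco Λ f l k) • outer (f j) (f k)
        + star (Sco Λ f j l * Tco Λ f l k) • outer (f k) (f j) := by
    rw [(Sco_spec hEP hf hPf hjl).1, (Tco_spec hEP hf hPf hlk).1]
    simp only [add_mul, mul_add, smul_mul_assoc, mul_smul_comm, outer_mul_outer, onf_ip hf,
      if_neg hjl, if_neg (Ne.symm hjl), if_neg hlk, if_neg (Ne.symm hlk), if_neg hjk,
      if_neg (Ne.symm hjk), eq_self_iff_true, if_true, one_smul, zero_smul, smul_zero,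
      add_zero, zero_add, smul_smul, star_mul']
    module
  rw [Tco, hjord, hexp, coeff_extract hf hjk]

lemma Tco_dich {j k : Fin d} (hjk : j ≠ k) :
    Tco Λ f j k = Complex.I * Sco Λ f j k ∨ Tco Λ f j k = -(Complex.I * Sco Λ f j k) :=
  unit_anti (Sco_spec hEP hf hPf hjk).2 (Tco_spec hEP hf hPf hjk).2 (Sco_anti hEP hf hPf hjk)

end
namespace WignerAux
open Complex
variable {d : ℕ}

lemma double_collapse (c : Fin d → Fin d → ℂ) (i m : Fin d) :
    ∑ j, ∑ k, c j k * (e j i * e k m) = c i m := by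
  rw [Finset.sum_eq_single i]
  · rw [Finset.sum_eq_single m]
    · simp [e]
    · intro b _ hb; simp [e, Ne.symm hb]
    · simp
  · intro b _ hb
    apply Finset.sum_eq_zero
    intro k _
    simp [e, Ne.symm hb]
  · simp

lemma double_collapse' (c : Fin d → Fin d → ℂ) (i m : Fin d) :
    ∑ j, ∑ k, c j k * (e k i * e j m) = c m i := by
  rw [Finset.sum_comm]
  exact double_collapse (fun a b => c b a) i m

lemma herm_decomp {ρ : Matrix (Fin d) (Fin d) ℂ} (hρ : ρ.IsHermitian) :
    (∑ j, ∑ k, (((ρ j k).re / 2 : ℝ) • Hm j k + ((ρ j k).im / 2 : ℝ) • Km j k)) = ρ := by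
  ext i m
  have hmi : ρ m i = star (ρ i m) := by
    conv_lhs => rw [← hρ]
    rfl
  calc (∑ j, ∑ k, (((ρ j k).re / 2 : ℝ) • Hm j k + ((ρ j k).im / 2 : ℝ) • Km j k)) i m
      = ∑ j, ∑ k,
          ((((ρ j k).re / 2 : ℝ) + ((ρ j k).im / 2 : ℝ) * Complex.I) * (e j i * e k m)
            + ((((ρ j k).re / 2 : ℝ)) - ((ρ j k).im / 2 : ℝ) * Complex.I) * (e k i * e j m)) := by
        simp only [Matrix.sum_apply]
        refine Finset.sum_congr rfl fun j _ => Finset.sum_congr rfl fun k _ => ?_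
        simp only [Matrix.add_apply, Matrix.smul_apply, Hm, Km, outer, Matrix.sub_apply,
          Matrix.smul_apply, smul_eq_mul, star_e, Complex.real_smul]
        ring
    _ = ((((ρ i m).re / 2 : ℝ) + ((ρ i m).im / 2 : ℝ) * Complex.I)
          + ((((ρ m i).re / 2 : ℝ)) - ((ρ m i).im / 2 : ℝ) * Complex.I)) := by
        simp only [Finset.sum_add_distrib]
        rw [double_collapse (fun j k => (((ρ j k).re / 2 : ℝ) + ((ρ j k).im / 2 : ℝ) * Complex.I)),
          double_collapse' (fun j k => ((((ρ j k).re / 2 : ℝ)) - ((ρ j k).im / 2 : ℝ) * Complex.I))]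
    _ = ρ i m := by
        rw [hmi]
        simp only [Complex.star_def, Complex.conj_re, Complex.conj_im]
        conv_rhs => rw [← Complex.re_add_im (ρ i m)]
        push_cast
        ring

/-- conjugation by U as an ℝ-linear map -/
def conjMap (U : Matrix (Fin d) (Fin d) ℂ) :
    Matrix (Fin d) (Fin d) ℂ →ₗ[ℝ] Matrix (Fin d) (Fin d) ℂ where
  toFun ρ := U * ρ * Uᴴ
  map_add' a b := by noncomm_ring
  map_smul' r a := by
    simp only [RingHom.id_apply]
    rw [real_smul_matrix, real_smul_matrix, Matrix.mul_smul, Matrix.smul_mul]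

/-- conjugation by U combined with transposition as an ℝ-linear map -/
def conjMapT (U : Matrix (Fin d) (Fin d) ℂ) :
    Matrix (Fin d) (Fin d) ℂ →ₗ[ℝ] Matrix (Fin d) (Fin d) ℂ where
  toFun ρ := U * ρᵀ * Uᴴ
  map_add' a b := by
    show U * (a + b)ᵀ * Uᴴ = U * aᵀ * Uᴴ + U * bᵀ * Uᴴ
    rw [Matrix.transpose_add]
    noncomm_ring
  map_smul' r a := by
    show U * (r • a)ᵀ * Uᴴ = r • (U * aᵀ * Uᴴ)
    rw [real_smul_matrix, real_smul_matrix, Matrix.transpose_smul, Matrix.mul_smul,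
      Matrix.smul_mul]

lemma conjMap_apply (U ρ : Matrix (Fin d) (Fin d) ℂ) : conjMap U ρ = U * ρ * Uᴴ := rfl

lemma conjMapT_apply (U ρ : Matrix (Fin d) (Fin d) ℂ) : conjMapT U ρ = U * ρᵀ * Uᴴ := rfl

lemma lin_eq_on_herm (Φ Ψ : Matrix (Fin d) (Fin d) ℂ →ₗ[ℝ] Matrix (Fin d) (Fin d) ℂ)
    (h1 : ∀ j k, Φ (Hm j k) = Ψ (Hm j k)) (h2 : ∀ j k, Φ (Km j k) = Ψ (Km j k))
    {ρ : Matrix (Fin d) (Fin d) ℂ} (hρ : ρ.IsHermitian) : Φ ρ = Ψ ρ := by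
  rw [← herm_decomp hρ, map_sum, map_sum]
  refine Finset.sum_congr rfl fun j _ => ?_
  rw [map_sum, map_sum]
  refine Finset.sum_congr rfl fun k _ => ?_
  rw [map_add, map_add, _root_.map_smul, _root_.map_smul, _root_.map_smul, _root_.map_smul,
    h1, h2]

lemma conj_outer (U : Matrix (Fin d) (Fin d) ℂ) (x y : Fin d → ℂ) :
    U * outer x y * Uᴴ = outer (U.mulVec x) (U.mulVec y) := by
  ext i m
  simp only [Matrix.mul_apply, Matrix.conjTranspose_apply, outer, Matrix.mulVec, dotProduct,
    star_sum, star_mul', Finset.sum_mul, Finset.mul_sum]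
  refine Finset.sum_congr rfl fun p _ => Finset.sum_congr rfl fun q _ => ?_
  ring

lemma outer_smul_smul (c c' : ℂ) (x y : Fin d → ℂ) :
    outer (fun i => c * x i) (fun i => c' * y i) = (c * star c') • outer x y := by
  ext i m
  simp only [outer, Matrix.smul_apply, star_mul', smul_eq_mul]
  ring

/-- the implementing unitary -/
def Umat (γ : Fin d → ℂ) (f : Fin d → Fin d → ℂ) : Matrix (Fin d) (Fin d) ℂ :=
  Matrix.of fun i k => star (γ k) * f k i

lemma Umat_mulVec (γ : Fin d → ℂ) (f : Fin d → Fin d → ℂ) (a : Fin d) :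
    (Umat γ f).mulVec (e a) = fun i => star (γ a) * f a i := by
  funext i
  rw [Matrix.mulVec, dotProduct, Finset.sum_eq_single a]
  · simp [e, Umat]
  · intro b _ hb; simp [e, hb, Umat]
  · simp

lemma Umat_unitary {γ : Fin d → ℂ} {f : Fin d → Fin d → ℂ} (hf : OrthonormalFam f)
    (hγ : ∀ k, γ k * star (γ k) = 1) : Umat γ f ∈ Matrix.unitaryGroup (Fin d) ℂ := by
  rw [Matrix.mem_unitaryGroup_iff']
  ext k l
  have : (star (Umat γ f) * Umat γ f) k l = γ k * star (γ l) * ip (f k) (f l) := by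
    simp only [Matrix.mul_apply, Matrix.star_apply, Umat, Matrix.of_apply, star_mul',
      star_star, ip, Finset.mul_sum]
    refine Finset.sum_congr rfl fun i _ => ?_
    ring
  rw [this, onf_ip hf]
  by_cases h : k = l
  · subst h
    simp only [eq_self_iff_true, if_true, mul_one, Matrix.one_apply_eq]
    exact hγ k
  · simp [h, Matrix.one_apply]

lemma Umat_conj_outer {γ : Fin d → ℂ} {f : Fin d → Fin d → ℂ} (a b : Fin d) :
    Umat γ f * outer (e a) (e b) * (Umat γ f)ᴴ = (star (γ a) * γ b) • outer (f a) (f b) := by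
  rw [conj_outer, Umat_mulVec, Umat_mulVec, outer_smul_smul, star_star]

end WignerAux
section
open WignerAux Complex
variable {d : ℕ}
variable {Λ : Matrix (Fin d) (Fin d) ℂ →ₗ[ℝ] Matrix (Fin d) (Fin d) ℂ}
  (hEP : ∀ v : Fin d → Fin d → ℂ, OrthonormalFam v →
      ∃ v' : Fin d → Fin d → ℂ, OrthonormalFam v' ∧ ∀ k, Λ (proj (v k)) = proj (v' k))
  {f : Fin d → Fin d → ℂ} (hf : OrthonormalFam f)
  (hPf : ∀ l, Λ (proj (e l)) = proj (f l))

include hEP hf hPf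

/-- there is a unitary conjugating the basis outer products correctly -/
lemma exists_U (hd : 0 < d) :
    ∃ U ∈ Matrix.unitaryGroup (Fin d) ℂ,
      (∀ j, U * outer (e j) (e j) * Uᴴ = outer (f j) (f j)) ∧
      (∀ j k, j ≠ k → U * outer (e j) (e k) * Uᴴ = Sco Λ f j k • outer (f j) (f k)) := by
  set z : Fin d := ⟨0, hd⟩ with hz
  set γ : Fin d → ℂ := fun k => if k = z then 1 else Sco Λ f z k with hγ
  have hγu : ∀ k, γ k * star (γ k) = 1 := by
    intro k
    by_cases h : k = z
    · simp [hγ, h]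
    · simp only [hγ, if_neg h]
      exact (Sco_spec hEP hf hPf (fun he => h he.symm)).2
  have hSγ : ∀ j k, j ≠ k → Sco Λ f j k = star (γ j) * γ k := by
    intro j k hjk
    by_cases hjz : j = z
    · have hgj : γ j = 1 := by simp [hγ, hjz]
      have hgk : γ k = Sco Λ f z k := by
        simp only [hγ]
        rw [if_neg (fun h : k = z => hjk (hjz.trans h.symm))]
      rw [hgj, hgk, star_one, one_mul, hjz]
    · by_cases hkz : k = z
      · have hgj : γ j = Sco Λ f z j := by
          simp only [hγ]; rw [if_neg hjz]
        have hgk : γ k = 1 := by simp [hγ, hkz]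
        rw [hgj, hgk, mul_one, hkz]
        exact Sco_flip hEP hf hPf (fun h : z = j => hjz h.symm)
      · have hgj : γ j = Sco Λ f z j := by
          simp only [hγ]; rw [if_neg hjz]
        have hgk : γ k = Sco Λ f z k := by
          simp only [hγ]; rw [if_neg hkz]
        rw [hgj, hgk, Sco_triple hEP hf hPf hjz (fun h : z = k => hkz h.symm) hjk,
          Sco_flip hEP hf hPf (fun h : z = j => hjz h.symm)]
  refine ⟨Umat γ f, Umat_unitary hf hγu, ?_, ?_⟩
  · intro j
    rw [Umat_conj_outer]
    have : star (γ j) * γ j = 1 := by rw [mul_comm]; exact hγu j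
    rw [this, one_smul]
  · intro j k hjk
    rw [Umat_conj_outer, hSγ j k hjk]

/-- the main construction -/
lemma part2 (hd : 0 < d) :
    ∃ U ∈ Matrix.unitaryGroup (Fin d) ℂ,
      ((∀ ρ : Matrix (Fin d) (Fin d) ℂ, ρ.IsHermitian → Λ ρ = U * ρ * Uᴴ) ∨
       (∀ ρ : Matrix (Fin d) (Fin d) ℂ, ρ.IsHermitian → Λ ρ = U * ρᵀ * Uᴴ)) := by
  obtain ⟨U, hU, hUdiag, hUoff⟩ := exists_U hEP hf hPf hd
  have keyH : ∀ j k, Λ (Hm j k) = conjMap U (Hm j k) := by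
    intro j k
    rcases eq_or_ne j k with rfl | hjk
    · have hH : Hm j j = proj (e j) + proj (e j) := rfl
      rw [hH, map_add, hPf j, conjMap_apply, Matrix.mul_add, Matrix.add_mul,
        proj_eq_outer, proj_eq_outer, hUdiag j]
    · rw [(Sco_spec hEP hf hPf hjk).1, conjMap_apply, Hm, Matrix.mul_add, Matrix.add_mul,
        hUoff j k hjk, hUoff k j (Ne.symm hjk), Sco_flip hEP hf hPf hjk]
  -- dichotomy
  by_cases hstr : ∀ j k : Fin d, j ≠ k → Tco Λ f j k = Complex.I * Sco Λ f j k
  · refine ⟨U, hU, Or.inl fun ρ hρ => ?_⟩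
    have keyK : ∀ j k, Λ (Km j k) = conjMap U (Km j k) := by
      intro j k
      rcases eq_or_ne j k with rfl | hjk
      · rw [Km_self, map_zero, conjMap_apply, Matrix.mul_zero, Matrix.zero_mul]
      · rw [(Tco_spec hEP hf hPf hjk).1, hstr j k hjk, conjMap_apply, Km,
          Matrix.mul_smul, Matrix.smul_mul, Matrix.mul_sub, Matrix.sub_mul,
          hUoff j k hjk, hUoff k j (Ne.symm hjk), Sco_flip hEP hf hPf hjk]
        simp only [star_mul', star_star, Complex.star_def, Complex.conj_I, smul_sub,
          smul_smul]
        module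
    exact lin_eq_on_herm Λ (conjMap U) keyH keyK hρ
  · push_neg at hstr
    obtain ⟨j0, k0, hj0k0, hT0⟩ := hstr
    -- connectivity: if any pair is "straight" then all are; contrapositive gives all flipped
    have flipP : ∀ j k, (hjk : j ≠ k) → Tco Λ f j k = Complex.I * Sco Λ f j k →
        Tco Λ f k j = Complex.I * Sco Λ f k j := by
      intro j k hjk h
      rw [Tco_flip hEP hf hPf hjk, Sco_flip hEP hf hPf hjk, h]
      simp only [star_mul', star_star, Complex.star_def, Complex.conj_I]
      ring
    have chg1 : ∀ j j' k, j ≠ k → j' ≠ k → Tco Λ f j k = Complex.I * Sco Λ f j k →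
        Tco Λ f j' k = Complex.I * Sco Λ f j' k := by
      intro j j' k hjk h'k h
      rcases eq_or_ne j' j with rfl | hne
      · exact h
      · rw [Tco_triple hEP hf hPf hne hjk h'k, h, Sco_triple hEP hf hPf hne hjk h'k]
        ring
    have chg2 : ∀ j k k', j ≠ k → j ≠ k' → Tco Λ f j k = Complex.I * Sco Λ f j k →
        Tco Λ f j k' = Complex.I * Sco Λ f j k' := by
      intro j k k' hjk hjk' h
      exact flipP k' j (Ne.symm hjk')
        (chg1 k k' j (Ne.symm hjk) (Ne.symm hjk') (flipP j k hjk h))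
    have conn : ∀ j k, j ≠ k → Tco Λ f j k = Complex.I * Sco Λ f j k →
        Tco Λ f j0 k0 = Complex.I * Sco Λ f j0 k0 := by
      intro j k hjk h
      by_cases hkk : k0 = k
      · subst hkk; exact chg1 j j0 k0 hjk hj0k0 h
      · by_cases hjk0 : j = k0
        · subst hjk0
          exact chg1 k j0 j (Ne.symm hjk) hj0k0 (flipP j k hjk h)
        · exact chg1 j j0 k0 (hjk0)
            hj0k0 (chg2 j k k0 hjk hjk0 h)
    have hflip : ∀ j k, j ≠ k → Tco Λ f j k = -(Complex.I * Sco Λ f j k) := by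
      intro j k hjk
      rcases Tco_dich hEP hf hPf hjk with h | h
      · exact absurd (conn j k hjk h) hT0
      · exact h
    refine ⟨U, hU, Or.inr fun ρ hρ => ?_⟩
    have keyHT : ∀ j k, Λ (Hm j k) = conjMapT U (Hm j k) := by
      intro j k
      rw [conjMapT_apply, Hm_transpose, ← conjMap_apply, keyH]
    have keyKT : ∀ j k, Λ (Km j k) = conjMapT U (Km j k) := by
      intro j k
      rcases eq_or_ne j k with rfl | hjk
      · rw [Km_self, map_zero, conjMapT_apply, Matrix.transpose_zero, Matrix.mul_zero,
          Matrix.zero_mul]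
      · rw [(Tco_spec hEP hf hPf hjk).1, hflip j k hjk, conjMapT_apply, Km_transpose,
          Matrix.mul_neg, Matrix.neg_mul, Km, Matrix.mul_smul, Matrix.smul_mul,
          Matrix.mul_sub, Matrix.sub_mul, hUoff j k hjk, hUoff k j (Ne.symm hjk),
          Sco_flip hEP hf hPf hjk]
        simp only [star_mul', star_star, _root_.map_mul, Complex.star_def, Complex.conj_I, smul_sub,
          smul_smul, neg_smul, neg_sub, neg_neg, map_neg, neg_mul]
        module
    exact lin_eq_on_herm Λ (conjMapT U) keyHT keyKT hρ

end
/-- A linear eigenvalue-preserving map (one mapping, for every orthonormal basis, the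
associated family of rank-one projectors onto a family of projectors coming from another
orthonormal basis) preserves the modulus of inner products; consequently, by Wigner's theorem,
it is implemented by a unitary or an antiunitary transformation. -/
theorem linear_EP_map_unitary_or_antiunitary {d : ℕ}
    (Λ : Matrix (Fin d) (Fin d) ℂ →ₗ[ℝ] Matrix (Fin d) (Fin d) ℂ)
    (hEP : ∀ v : Fin d → Fin d → ℂ, OrthonormalFam v →
      ∃ v' : Fin d → Fin d → ℂ, OrthonormalFam v' ∧ ∀ k, Λ (proj (v k)) = proj (v' k)) :
    (∀ x y x' y' : Fin d → ℂ,
        (∑ i, star (x i) * x i) = 1 → (∑ i, star (y i) * y i) = 1 →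
        Λ (proj x) = proj x' → Λ (proj y) = proj y' →
        ‖∑ i, star (x i) * y i‖ = ‖∑ i, star (x' i) * y' i‖) ∧
      ∃ U : Matrix (Fin d) (Fin d) ℂ, U ∈ Matrix.unitaryGroup (Fin d) ℂ ∧
        ((∀ ρ : Matrix (Fin d) (Fin d) ℂ, ρ.IsHermitian → Λ ρ = U * ρ * Uᴴ) ∨
         (∀ ρ : Matrix (Fin d) (Fin d) ℂ, ρ.IsHermitian → Λ ρ = U * ρᵀ * Uᴴ)) := by
  constructor
  · intro x y x' y' _ _ hx hy
    have h := modulus_pres Λ hEP hx hy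
    simpa [WignerAux.ip] using h
  · rcases Nat.eq_zero_or_pos d with hd0 | hd
    · subst hd0
      refine ⟨1, one_mem _, Or.inl fun ρ _ => ?_⟩
      haveI : Subsingleton (Matrix (Fin 0) (Fin 0) ℂ) :=
        ⟨fun a b => by ext i j; exact i.elim0⟩
      exact Subsingleton.elim _ _
    · obtain ⟨f, hf, hPf⟩ := hEP WignerAux.e WignerAux.onf_e
      exact part2 hEP hf hPf hd

end
end

section
/- Let a, ã ∈ ℝ≥0^{m} and b, b̃ ∈ ℝ≥0^{n} be sequences with Σ a_j = Σ b_k = 1, Σ ã_j > 0, Σ b̃_k > 0. Define F_a = (Σ_j √(a_j ã_j))/√(Σ_j ã_j) where both a and ã are sorted descending, and similarly F_b; define F as the analogous sorted fidelity between the product sequences (a_j b_k)_{jk} and (ã_j b̃_k)_{jk}, each sorted descending and normalized by √(Σ_{jk} ã_j b̃_k). Then −log₂ F ≤ −log₂ F_a − log₂ F_b. In particular, the sorted logarithmic-fidelity measure is subadditive under taking products of eigenvalue multisets. -/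
open Matrix

noncomputable section


namespace SLFHelper

/-- The permutation that sorts `w` in descending order. -/
def dperm {N : ℕ} (w : Fin N → ℝ) : Equiv.Perm (Fin N) :=
  Fin.revPerm.trans (Tuple.sort w)

/-- `w` sorted in descending order. -/
def dsort {N : ℕ} (w : Fin N → ℝ) : Fin N → ℝ := w ∘ (dperm w)

lemma dsort_antitone {N : ℕ} (w : Fin N → ℝ) : Antitone (dsort w) := by
  have h : Monotone (w ∘ Tuple.sort w) := Tuple.monotone_sort w
  intro i j hij
  exact h (by simpa [Fin.rev_le_rev] using hij)

lemma dsort_sorted {N : ℕ} (w : Fin N → ℝ) :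
    (List.ofFn (dsort w)).Pairwise (· ≥ ·) := by
  rw [List.pairwise_ofFn]
  intro i j hij
  exact dsort_antitone w hij.le

lemma dsort_multiset {N : ℕ} (w : Fin N → ℝ) :
    ((List.ofFn (dsort w)) : Multiset ℝ) = Finset.univ.val.map w := by
  rw [Fin.univ_val_map, Multiset.coe_eq_coe]
  exact (dperm w).ofFn_comp_perm w

lemma eq_dsort {N : ℕ} (w : Fin N → ℝ) (l : List ℝ) (hl : l.Pairwise (· ≥ ·))
    (hml : (l : Multiset ℝ) = Finset.univ.val.map w) : l = List.ofFn (dsort w) := by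
  refine List.Perm.eq_of_pairwise' hl (dsort_sorted w) ?_
  rw [← Multiset.coe_eq_coe, hml, dsort_multiset]

lemma ofFn_zipWith {N : ℕ} (f : ℝ → ℝ → ℝ) (u v : Fin N → ℝ) :
    List.zipWith f (List.ofFn u) (List.ofFn v) = List.ofFn (fun i => f (u i) (v i)) := by
  apply List.ext_getElem <;> simp

lemma dsort_sum {N : ℕ} (w : Fin N → ℝ) : ∑ i, dsort w i = ∑ i, w i :=
  Equiv.sum_comp (dperm w) w

lemma map_univ_comp_equiv {α β : Type*} [Fintype α] [Fintype β] (e : α ≃ β) (f : β → ℝ) :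
    Finset.univ.val.map (f ∘ e) = Finset.univ.val.map f := by
  rw [← Multiset.map_univ_val_equiv e, Multiset.map_map]

lemma key {N : ℕ} (x y : Fin N → ℝ) :
    ∑ i, Real.sqrt (x i) * Real.sqrt (y i)
      ≤ ∑ i, Real.sqrt (dsort x i) * Real.sqrt (dsort y i) := by
  have hfg : Monovary (fun i => Real.sqrt (dsort x i)) (fun i => Real.sqrt (dsort y i)) := by
    intro i j hij
    by_contra hc
    push_neg at hc
    rcases le_or_gt i j with h | h
    · exact absurd (Real.sqrt_le_sqrt (dsort_antitone y h)) (not_le.mpr hij)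
    · exact absurd (Real.sqrt_le_sqrt (dsort_antitone x h.le)) (not_le.mpr hc)
  have h := hfg.sum_mul_comp_perm_le_sum_mul
    (σ := (dperm x).trans (dperm y).symm)
  calc ∑ i, Real.sqrt (x i) * Real.sqrt (y i)
      = ∑ i, Real.sqrt (x (dperm x i)) * Real.sqrt (y (dperm x i)) :=
        (Equiv.sum_comp (dperm x) fun i => Real.sqrt (x i) * Real.sqrt (y i)).symm
    _ = ∑ i, Real.sqrt (dsort x i) * Real.sqrt (dsort y (((dperm x).trans (dperm y).symm) i)) := by
        refine Finset.sum_congr rfl fun i _ => ?_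
        simp [dsort]
    _ ≤ ∑ i, Real.sqrt (dsort x i) * Real.sqrt (dsort y i) := h

lemma dsort_zero_pos {N : ℕ} (w : Fin N → ℝ) (hw : ∀ i, 0 ≤ w i) (hs : 0 < ∑ i, w i)
    (i0 : Fin N) (hi0 : i0.1 = 0) : 0 < dsort w i0 := by
  by_contra h
  push_neg at h
  have h2 : ∀ i ∈ Finset.univ, dsort w i ≤ 0 := fun i _ =>
    le_trans (dsort_antitone w (by simp [Fin.le_def, hi0])) h
  have h3 := Finset.sum_nonpos h2
  rw [dsort_sum] at h3
  linarith

lemma fid_pos {N : ℕ} (u v : Fin N → ℝ) (hu : ∀ i, 0 ≤ u i) (hv : ∀ i, 0 ≤ v i)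
    (hus : 0 < ∑ i, u i) (hvs : 0 < ∑ i, v i) :
    0 < ∑ i, Real.sqrt (dsort u i * dsort v i) := by
  have hN : 0 < N := by
    rcases Nat.eq_zero_or_pos N with h | h
    · subst h; simp at hus
    · exact h
  set i0 : Fin N := ⟨0, hN⟩
  have hpos : 0 < Real.sqrt (dsort u i0 * dsort v i0) :=
    Real.sqrt_pos.mpr (mul_pos (dsort_zero_pos u hu hus i0 rfl) (dsort_zero_pos v hv hvs i0 rfl))
  exact lt_of_lt_of_le hpos
    (Finset.single_le_sum (f := fun i => Real.sqrt (dsort u i * dsort v i))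
      (fun i _ => Real.sqrt_nonneg _) (Finset.mem_univ i0))

end SLFHelper

open SLFHelper

set_option maxHeartbeats 2000000

/-- Subadditivity of the sorted logarithmic fidelity under products of eigenvalue multisets:
with `F_a`, `F_b` the sorted fidelities of the pairs `(a, ã)`, `(b, b̃)` and `F` the sorted
fidelity of the product sequences `(a_j b_k)` and `(ã_j b̃_k)`, one has
`−log₂ F ≤ −log₂ F_a − log₂ F_b`. -/
theorem sorted_log_fidelity_subadditive {m n : ℕ}
    (a at' : Fin m → ℝ) (b bt : Fin n → ℝ)
    (ha : ∀ j, 0 ≤ a j) (hat : ∀ j, 0 ≤ at' j) (hb : ∀ k, 0 ≤ b k) (hbt : ∀ k, 0 ≤ bt k)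
    (ha1 : ∑ j, a j = 1) (hb1 : ∑ k, b k = 1)
    (hatpos : 0 < ∑ j, at' j) (hbtpos : 0 < ∑ k, bt k)
    (la lat : List ℝ) (lb lbt : List ℝ) (lab labt : List ℝ)
    (hla : la.Pairwise (· ≥ ·)) (hlat : lat.Pairwise (· ≥ ·))
    (hlb : lb.Pairwise (· ≥ ·)) (hlbt : lbt.Pairwise (· ≥ ·))
    (hlab : lab.Pairwise (· ≥ ·)) (hlabt : labt.Pairwise (· ≥ ·))
    (hpa : (la : Multiset ℝ) = Finset.univ.val.map a)
    (hpat : (lat : Multiset ℝ) = Finset.univ.val.map at')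
    (hpb : (lb : Multiset ℝ) = Finset.univ.val.map b)
    (hpbt : (lbt : Multiset ℝ) = Finset.univ.val.map bt)
    (hpab : (lab : Multiset ℝ) =
      (Finset.univ : Finset (Fin m × Fin n)).val.map (fun p => a p.1 * b p.2))
    (hpabt : (labt : Multiset ℝ) =
      (Finset.univ : Finset (Fin m × Fin n)).val.map (fun p => at' p.1 * bt p.2))
    (Fa Fb F : ℝ)
    (hFa : Fa = (List.zipWith (fun s t => Real.sqrt (s * t)) la lat).sum / Real.sqrt lat.sum)
    (hFb : Fb = (List.zipWith (fun s t => Real.sqrt (s * t)) lb lbt).sum / Real.sqrt lbt.sum)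
    (hF : F = (List.zipWith (fun s t => Real.sqrt (s * t)) lab labt).sum / Real.sqrt labt.sum) :
    - Real.logb 2 F ≤ - Real.logb 2 Fa - Real.logb 2 Fb := by
  classical
  set e : Fin m × Fin n ≃ Fin (m * n) := finProdFinEquiv with he
  set x' : Fin (m * n) → ℝ := fun i => dsort a (e.symm i).1 * dsort b (e.symm i).2 with hx'
  set y' : Fin (m * n) → ℝ := fun i => dsort at' (e.symm i).1 * dsort bt (e.symm i).2 with hy'
  -- multiset identifications
  have hx'm : Finset.univ.val.map x' =
      (Finset.univ : Finset (Fin m × Fin n)).val.map (fun p => a p.1 * b p.2) := by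
    have hcomp : x' = (fun p : Fin m × Fin n => a p.1 * b p.2) ∘
        (e.symm.trans ((dperm a).prodCongr (dperm b))) := by
      funext i; rfl
    rw [hcomp, map_univ_comp_equiv]
  have hy'm : Finset.univ.val.map y' =
      (Finset.univ : Finset (Fin m × Fin n)).val.map (fun p => at' p.1 * bt p.2) := by
    have hcomp : y' = (fun p : Fin m × Fin n => at' p.1 * bt p.2) ∘
        (e.symm.trans ((dperm at').prodCongr (dperm bt))) := by
      funext i; rfl
    rw [hcomp, map_univ_comp_equiv]
  -- identify the lists as descending sorts
  have hla' : la = List.ofFn (dsort a) := eq_dsort _ _ hla hpa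
  have hlat' : lat = List.ofFn (dsort at') := eq_dsort _ _ hlat hpat
  have hlb' : lb = List.ofFn (dsort b) := eq_dsort _ _ hlb hpb
  have hlbt' : lbt = List.ofFn (dsort bt) := eq_dsort _ _ hlbt hpbt
  have hlab' : lab = List.ofFn (dsort x') := eq_dsort _ _ hlab (hpab.trans hx'm.symm)
  have hlabt' : labt = List.ofFn (dsort y') := eq_dsort _ _ hlabt (hpabt.trans hy'm.symm)
  -- numerators
  have hNa : (List.zipWith (fun s t => Real.sqrt (s * t)) la lat).sum
      = ∑ j, Real.sqrt (dsort a j * dsort at' j) := by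
    rw [hla', hlat', ofFn_zipWith, List.sum_ofFn]
  have hNb : (List.zipWith (fun s t => Real.sqrt (s * t)) lb lbt).sum
      = ∑ k, Real.sqrt (dsort b k * dsort bt k) := by
    rw [hlb', hlbt', ofFn_zipWith, List.sum_ofFn]
  have hNab : (List.zipWith (fun s t => Real.sqrt (s * t)) lab labt).sum
      = ∑ i, Real.sqrt (dsort x' i * dsort y' i) := by
    rw [hlab', hlabt', ofFn_zipWith, List.sum_ofFn]
  -- denominators
  have hlatsum : lat.sum = ∑ j, at' j := by
    rw [hlat', List.sum_ofFn, dsort_sum]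
  have hlbtsum : lbt.sum = ∑ k, bt k := by
    rw [hlbt', List.sum_ofFn, dsort_sum]
  have hlabtsum : labt.sum = (∑ j, at' j) * (∑ k, bt k) := by
    have hstep : ∑ i, y' i = ∑ p : Fin m × Fin n, dsort at' p.1 * dsort bt p.2 :=
      Equiv.sum_comp e.symm (fun p : Fin m × Fin n => dsort at' p.1 * dsort bt p.2)
    rw [hlabt', List.sum_ofFn, dsort_sum, hstep, Fintype.sum_prod_type,
      ← Finset.sum_mul_sum, dsort_sum, dsort_sum]
  -- nonnegativity of sorted entries
  have hda : ∀ j, 0 ≤ dsort a j := fun j => ha _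
  have hdat : ∀ j, 0 ≤ dsort at' j := fun j => hat _
  have hdb : ∀ k, 0 ≤ dsort b k := fun k => hb _
  have hdbt : ∀ k, 0 ≤ dsort bt k := fun k => hbt _
  have hx'nn : ∀ i, 0 ≤ x' i := fun i => mul_nonneg (hda _) (hdb _)
  have hy'nn : ∀ i, 0 ≤ y' i := fun i => mul_nonneg (hdat _) (hdbt _)
  -- key inequality: product of numerators ≤ product numerator
  have hmain : (∑ j, Real.sqrt (dsort a j * dsort at' j)) *
      (∑ k, Real.sqrt (dsort b k * dsort bt k))
      ≤ ∑ i, Real.sqrt (dsort x' i * dsort y' i) := by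
    have h1 : (∑ j, Real.sqrt (dsort a j * dsort at' j)) *
        (∑ k, Real.sqrt (dsort b k * dsort bt k))
        = ∑ i, Real.sqrt (x' i) * Real.sqrt (y' i) := by
      calc (∑ j, Real.sqrt (dsort a j * dsort at' j)) *
            (∑ k, Real.sqrt (dsort b k * dsort bt k))
          = ∑ j, ∑ k, Real.sqrt (dsort a j * dsort at' j) *
              Real.sqrt (dsort b k * dsort bt k) := Finset.sum_mul_sum _ _ _ _
        _ = ∑ p : Fin m × Fin n, Real.sqrt (dsort a p.1 * dsort at' p.1) *
              Real.sqrt (dsort b p.2 * dsort bt p.2) := by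
            exact (Fintype.sum_prod_type (fun p : Fin m × Fin n =>
              Real.sqrt (dsort a p.1 * dsort at' p.1) *
              Real.sqrt (dsort b p.2 * dsort bt p.2))).symm
        _ = ∑ i, Real.sqrt (dsort a (e.symm i).1 * dsort at' (e.symm i).1) *
              Real.sqrt (dsort b (e.symm i).2 * dsort bt (e.symm i).2) :=
            (Equiv.sum_comp e.symm (fun p : Fin m × Fin n =>
              Real.sqrt (dsort a p.1 * dsort at' p.1) *
              Real.sqrt (dsort b p.2 * dsort bt p.2))).symm
        _ = ∑ i, Real.sqrt (x' i) * Real.sqrt (y' i) := by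
            refine Finset.sum_congr rfl fun i _ => ?_
            rw [hx', hy']
            rw [Real.sqrt_mul (hda (e.symm i).1) (dsort at' (e.symm i).1),
              Real.sqrt_mul (hdb (e.symm i).2) (dsort bt (e.symm i).2),
              Real.sqrt_mul (hda (e.symm i).1) (dsort b (e.symm i).2),
              Real.sqrt_mul (hdat (e.symm i).1) (dsort bt (e.symm i).2)]
            ring
    have h2 : ∑ i, Real.sqrt (dsort x' i * dsort y' i)
        = ∑ i, Real.sqrt (dsort x' i) * Real.sqrt (dsort y' i) :=
      Finset.sum_congr rfl fun i _ => Real.sqrt_mul (hx'nn _) _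
    rw [h1, h2]
    exact key x' y'
  -- positivity
  have hNa_pos : 0 < ∑ j, Real.sqrt (dsort a j * dsort at' j) :=
    fid_pos a at' ha hat (by rw [ha1]; norm_num) hatpos
  have hNb_pos : 0 < ∑ k, Real.sqrt (dsort b k * dsort bt k) :=
    fid_pos b bt hb hbt (by rw [hb1]; norm_num) hbtpos
  have hsat : 0 < Real.sqrt (∑ j, at' j) := Real.sqrt_pos.mpr hatpos
  have hsbt : 0 < Real.sqrt (∑ k, bt k) := Real.sqrt_pos.mpr hbtpos
  have hFa_pos : 0 < Fa := by
    rw [hFa, hNa, hlatsum]; exact div_pos hNa_pos hsat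
  have hFb_pos : 0 < Fb := by
    rw [hFb, hNb, hlbtsum]; exact div_pos hNb_pos hsbt
  have hprod_le : Fa * Fb ≤ F := by
    rw [hFa, hFb, hF, hNa, hNb, hNab, hlatsum, hlbtsum, hlabtsum,
      Real.sqrt_mul hatpos.le]
    rw [div_mul_div_comm]
    exact (div_le_div_iff_of_pos_right (mul_pos hsat hsbt)).mpr hmain
  have hF_pos : 0 < F := lt_of_lt_of_le (mul_pos hFa_pos hFb_pos) hprod_le
  have hlog := Real.logb_le_logb_of_le (b := 2) one_lt_two
    (mul_pos hFa_pos hFb_pos) hprod_le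
  rw [Real.logb_mul hFa_pos.ne' hFb_pos.ne'] at hlog
  linarith


end
end

section
/- A tripartite density matrix ρ^{ABC} has a fully product (tripartite) eigenbasis if and only if it has a bipartite product eigenbasis for each of the three bipartite splittings A|BC, AB|C, and AC|B. -/
open Matrix
open scoped ComplexOrder

noncomputable section

variable {dA dB dC : ℕ}

/-- `w` is an eigenvector direction of `ρ`. -/
def IsEigvec {ι : Type*} [Fintype ι] (ρ : Matrix ι ι ℂ) (w : ι → ℂ) : Prop :=
  ∃ e : ℂ, ρ.mulVec w = e • w

/-- `ρ^{ABC}` has a fully product (tripartite) eigenbasis. -/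
def HasTriProductEigenbasis
    (ρ : Matrix (Fin dA × Fin dB × Fin dC) (Fin dA × Fin dB × Fin dC) ℂ) : Prop :=
  ∃ (a : Fin dA → Fin dA → ℂ) (b : Fin dB → Fin dB → ℂ) (c : Fin dC → Fin dC → ℂ),
    OrthonormalFam a ∧ OrthonormalFam b ∧ OrthonormalFam c ∧
    ∀ i j k, IsEigvec ρ (fun p => a i p.1 * b j p.2.1 * c k p.2.2)

/-- `ρ^{ABC}` has a bipartite product eigenbasis across the splitting `A|BC`. -/
def HasPE_A_BC
    (ρ : Matrix (Fin dA × Fin dB × Fin dC) (Fin dA × Fin dB × Fin dC) ℂ) : Prop :=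
  ∃ (u : Fin dA → Fin dA → ℂ) (w : Fin dB × Fin dC → Fin dB × Fin dC → ℂ),
    OrthonormalFam u ∧ OrthonormalFam w ∧
    ∀ i q, IsEigvec ρ (fun p => u i p.1 * w q p.2)

/-- `ρ^{ABC}` has a bipartite product eigenbasis across the splitting `AB|C`. -/
def HasPE_AB_C
    (ρ : Matrix (Fin dA × Fin dB × Fin dC) (Fin dA × Fin dB × Fin dC) ℂ) : Prop :=
  ∃ (t : Fin dA × Fin dB → Fin dA × Fin dB → ℂ) (u : Fin dC → Fin dC → ℂ),
    OrthonormalFam t ∧ OrthonormalFam u ∧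
    ∀ q k, IsEigvec ρ (fun p => t q (p.1, p.2.1) * u k p.2.2)

/-- `ρ^{ABC}` has a bipartite product eigenbasis across the splitting `AC|B`. -/
def HasPE_AC_B
    (ρ : Matrix (Fin dA × Fin dB × Fin dC) (Fin dA × Fin dB × Fin dC) ℂ) : Prop :=
  ∃ (x : Fin dA × Fin dC → Fin dA × Fin dC → ℂ) (y : Fin dB → Fin dB → ℂ),
    OrthonormalFam x ∧ OrthonormalFam y ∧
    ∀ q j, IsEigvec ρ (fun p => x q (p.1, p.2.2) * y j p.2.1)

lemma onf_complete {ι : Type*} [Fintype ι] [DecidableEq ι] {v : ι → ι → ℂ}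
    (hv : OrthonormalFam v) (i i' : ι) :
    ∑ q, v q i * star (v q i') = if i = i' then 1 else 0 := by
  classical
  let V : Matrix ι ι ℂ := Matrix.of fun i q => v q i
  have h1 : Vᴴ * V = 1 := by
    ext j k
    simpa [Matrix.mul_apply, Matrix.conjTranspose_apply, V, Matrix.one_apply] using hv j k
  have h2 : V * Vᴴ = 1 := mul_eq_one_comm.mp h1
  have h3 := Matrix.ext_iff.mpr h2 i i'
  simpa [Matrix.mul_apply, Matrix.conjTranspose_apply, V, Matrix.one_apply] using h3

lemma onf_expand {ι : Type*} [Fintype ι] [DecidableEq ι] {v : ι → ι → ℂ}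
    (hv : OrthonormalFam v) (g : ι → ℂ) (m : ι) :
    g m = ∑ q, (∑ m', star (v q m') * g m') * v q m := by
  have : ∑ q, (∑ m', star (v q m') * g m') * v q m
      = ∑ m', (∑ q, v q m * star (v q m')) * g m' := by
    simp_rw [Finset.sum_mul]
    rw [Finset.sum_comm]
    exact Finset.sum_congr rfl fun m' _ => Finset.sum_congr rfl fun q _ => by ring
  rw [this]
  simp_rw [onf_complete hv]
  simp

lemma onf_nonzero {ι : Type*} [Fintype ι] [DecidableEq ι] {v : ι → ι → ℂ}
    (hv : OrthonormalFam v) (i : ι) : ∃ m, v i m ≠ 0 := by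
  by_contra h
  push_neg at h
  have := hv i i
  simp [h] at this

lemma onf_prod {ι κ : Type*} [Fintype ι] [Fintype κ] [DecidableEq ι] [DecidableEq κ]
    {b : ι → ι → ℂ} {c : κ → κ → ℂ} (hb : OrthonormalFam b) (hc : OrthonormalFam c) :
    OrthonormalFam (fun (q : ι × κ) (r : ι × κ) => b q.1 r.1 * c q.2 r.2) := by
  intro j k
  have : (∑ i : ι × κ, star (b j.1 i.1 * c j.2 i.2) * (b k.1 i.1 * c k.2 i.2))
      = (∑ i1, star (b j.1 i1) * b k.1 i1) * (∑ i2, star (c j.2 i2) * c k.2 i2) := by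
    rw [Finset.sum_mul_sum, Fintype.sum_prod_type]
    refine Finset.sum_congr rfl fun i1 _ => Finset.sum_congr rfl fun i2 _ => ?_
    rw [star_mul']
    ring
  rw [this, hb j.1 k.1, hc j.2 k.2]
  by_cases h1 : j.1 = k.1 <;> by_cases h2 : j.2 = k.2 <;>
    simp [Prod.ext_iff, h1, h2]

lemma block_lemma {ι κ : Type*} [Fintype ι] [Fintype κ] [DecidableEq κ]
    (ρ : Matrix ι ι ℂ) (F : ι → ℂ) (s : ι → κ) (w : κ → κ → ℂ)
    (hw : OrthonormalFam w)
    (he : ∀ q, IsEigvec ρ (fun p => F p * w q (s p)))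
    (g : κ → ℂ) :
    ∃ G : κ → ℂ, ρ.mulVec (fun p => F p * g (s p)) = fun p => F p * G (s p) := by
  choose e he using he
  set cq : κ → ℂ := fun q => ∑ m', star (w q m') * g m' with hcq
  refine ⟨fun m => ∑ q, (cq q * e q) * w q m, ?_⟩
  funext p
  have key : ∀ q, (∑ p', ρ p p' * (F p' * w q (s p'))) = e q * (F p * w q (s p)) := by
    intro q
    have := congrFun (he q) p
    simpa [Matrix.mulVec, dotProduct] using this
  calc ρ.mulVec (fun p => F p * g (s p)) p
      = ∑ p', ρ p p' * (F p' * g (s p')) := by simp [Matrix.mulVec, dotProduct]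
    _ = ∑ p', ∑ q, cq q * (ρ p p' * (F p' * w q (s p'))) := by
        refine Finset.sum_congr rfl fun p' _ => ?_
        rw [onf_expand hw g (s p'), Finset.mul_sum, Finset.mul_sum]
        exact Finset.sum_congr rfl fun q _ => by ring
    _ = ∑ q, ∑ p', cq q * (ρ p p' * (F p' * w q (s p'))) := Finset.sum_comm
    _ = ∑ q, cq q * (e q * (F p * w q (s p))) := by
        refine Finset.sum_congr rfl fun q _ => ?_
        rw [← Finset.mul_sum, key q]
    _ = F p * ∑ q, (cq q * e q) * w q (s p) := by
        rw [Finset.mul_sum]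
        exact Finset.sum_congr rfl fun q _ => by ring

/-- A tripartite density matrix has a fully product eigenbasis if and only if it has a
bipartite product eigenbasis for each of the three bipartite splittings. -/
theorem triProductEigenbasis_iff
    (ρ : Matrix (Fin dA × Fin dB × Fin dC) (Fin dA × Fin dB × Fin dC) ℂ)
    (hρ : ρ.PosSemidef) (htr : ρ.trace = 1) :
    HasTriProductEigenbasis ρ ↔ HasPE_A_BC ρ ∧ HasPE_AB_C ρ ∧ HasPE_AC_B ρ := by
  constructor
  · rintro ⟨a, b, c, ha, hb, hc, heig⟩
    refine ⟨⟨a, fun q r => b q.1 r.1 * c q.2 r.2, ha, onf_prod hb hc, ?_⟩,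
            ⟨fun q r => a q.1 r.1 * b q.2 r.2, c, onf_prod ha hb, hc, ?_⟩,
            ⟨fun q r => a q.1 r.1 * c q.2 r.2, b, onf_prod ha hc, hb, ?_⟩⟩
    · intro i q
      have h : (fun p : Fin dA × Fin dB × Fin dC =>
            a i p.1 * (b q.1 p.2.1 * c q.2 p.2.2))
          = fun p => a i p.1 * b q.1 p.2.1 * c q.2 p.2.2 := by funext p; ring
      rw [h]
      exact heig i q.1 q.2
    · intro q k
      exact heig q.1 q.2 k
    · intro q j
      have h : (fun p : Fin dA × Fin dB × Fin dC =>
            a q.1 (p.1, p.2.2).1 * c q.2 (p.1, p.2.2).2 * b j p.2.1)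
          = fun p => a q.1 p.1 * b j p.2.1 * c q.2 p.2.2 := by funext p; ring
      rw [h]
      exact heig q.1 j q.2
  · rintro ⟨⟨u, w, hu, hw, h1⟩, ⟨t, v, ht, hv, h2⟩, ⟨x, y, hx, hy, h3⟩⟩
    refine ⟨u, y, v, hu, hy, hv, ?_⟩
    intro i j k
    obtain ⟨G1, hG1⟩ := block_lemma ρ (fun p => u i p.1) (fun p => p.2) w hw
      (fun q => h1 i q) (fun m => y j m.1 * v k m.2)
    have he2 : ∀ q, IsEigvec ρ (fun p : Fin dA × Fin dB × Fin dC =>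
        v k p.2.2 * t q (p.1, p.2.1)) := by
      intro q
      have heq : (fun p : Fin dA × Fin dB × Fin dC => v k p.2.2 * t q (p.1, p.2.1))
          = fun p => t q (p.1, p.2.1) * v k p.2.2 := by funext p; ring
      rw [heq]
      exact h2 q k
    obtain ⟨G2, hG2⟩ := block_lemma ρ (fun p => v k p.2.2) (fun p => (p.1, p.2.1)) t ht
      he2 (fun m => u i m.1 * y j m.2)
    have he3 : ∀ q, IsEigvec ρ (fun p : Fin dA × Fin dB × Fin dC =>
        y j p.2.1 * x q (p.1, p.2.2)) := by
      intro q
      have heq : (fun p : Fin dA × Fin dB × Fin dC => y j p.2.1 * x q (p.1, p.2.2))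
          = fun p => x q (p.1, p.2.2) * y j p.2.1 := by funext p; ring
      rw [heq]
      exact h3 q j
    obtain ⟨G3, hG3⟩ := block_lemma ρ (fun p => y j p.2.1) (fun p => (p.1, p.2.2)) x hx
      he3 (fun m => u i m.1 * v k m.2)
    set f : Fin dA × Fin dB × Fin dC → ℂ :=
      fun p => u i p.1 * y j p.2.1 * v k p.2.2 with hf
    have hf1 : (fun p : Fin dA × Fin dB × Fin dC =>
        u i p.1 * (y j p.2.1 * v k p.2.2)) = f := by funext p; rw [hf]; ring
    have hf2 : (fun p : Fin dA × Fin dB × Fin dC =>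
        v k p.2.2 * (u i p.1 * y j p.2.1)) = f := by funext p; rw [hf]; ring
    have hf3 : (fun p : Fin dA × Fin dB × Fin dC =>
        y j p.2.1 * (u i p.1 * v k p.2.2)) = f := by funext p; rw [hf]; ring
    rw [hf1] at hG1
    rw [hf2] at hG2
    rw [hf3] at hG3
    have E1 : ∀ a b c, ρ.mulVec f (a, b, c) = u i a * G1 (b, c) := by
      intro a b c
      have := congrFun hG1 (a, b, c)
      simpa using this
    have E2 : ∀ a b c, ρ.mulVec f (a, b, c) = v k c * G2 (a, b) := by
      intro a b c
      have := congrFun hG2 (a, b, c)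
      simpa using this
    have E3 : ∀ a b c, ρ.mulVec f (a, b, c) = y j b * G3 (a, c) := by
      intro a b c
      have := congrFun hG3 (a, b, c)
      simpa using this
    obtain ⟨b0, hb0⟩ := onf_nonzero hy j
    obtain ⟨c0, hc0⟩ := onf_nonzero hv k
    refine ⟨G1 (b0, c0) / (y j b0 * v k c0), ?_⟩
    funext p
    obtain ⟨a, b, c⟩ := p
    have key : ρ.mulVec f (a, b, c) * (y j b0 * v k c0)
        = G1 (b0, c0) * (u i a * y j b * v k c) := by
      have D := E2 a b c
      have E := E2 a b c0
      have Fh := E3 a b c0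
      have Gh := E1 a b0 c0
      have Hh := E3 a b0 c0
      linear_combination (y j b0 * v k c0) * D + (y j b0 * v k c) * Fh
        - (y j b0 * v k c) * E + (y j b * v k c) * Gh - (y j b * v k c) * Hh
    rw [Pi.smul_apply, smul_eq_mul]
    have hne : y j b0 * v k c0 ≠ 0 := mul_ne_zero hb0 hc0
    rw [div_mul_eq_mul_div, eq_div_iff hne]
    rw [show f (a, b, c) = u i a * y j b * v k c from rfl] at *
    linear_combination key
end
end

section
/- An m-partite density matrix ρ on ℂ^{d_1}⊗⋯⊗ℂ^{d_m} has a fully product eigenbasis (an orthonormal eigenbasis of vectors of the form |v_1⟩⊗⋯⊗|v_m⟩ drawn from orthonormal bases of each factor) if and only if ρ has a product eigenbasis for every bipartite splitting of {1,…,m} into two nonempty subsets. -/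
open Matrix
open scoped ComplexOrder

noncomputable section

variable {m : ℕ} {d : Fin m → ℕ}

/-- An `m`-partite matrix has a fully product eigenbasis: an orthonormal eigenbasis consisting
of vectors `|v_1⟩⊗⋯⊗|v_m⟩` drawn from orthonormal bases of each factor. -/
def HasFullProductEigenbasis
    (ρ : Matrix (∀ i, Fin (d i)) (∀ i, Fin (d i)) ℂ) : Prop :=
  ∃ v : (i : Fin m) → Fin (d i) → (Fin (d i) → ℂ),
    (∀ i, OrthonormalFam (v i)) ∧
    ∀ t : ∀ i, Fin (d i), IsEigvec ρ (fun p => ∏ i, v i (t i) (p i))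

/-- An `m`-partite matrix has a product eigenbasis for the bipartite splitting `S | Sᶜ`:
an orthonormal eigenbasis each of whose vectors factorizes across the bipartition. -/
def HasSplitProductEigenbasis (S : Finset (Fin m))
    (ρ : Matrix (∀ i, Fin (d i)) (∀ i, Fin (d i)) ℂ) : Prop :=
  ∃ (x : ((i : {i // i ∈ S}) → Fin (d i.1)) → ((i : {i // i ∈ S}) → Fin (d i.1)) → ℂ)
    (y : ((i : {i // i ∉ S}) → Fin (d i.1)) → ((i : {i // i ∉ S}) → Fin (d i.1)) → ℂ),
    OrthonormalFam x ∧ OrthonormalFam y ∧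
    ∀ s t, IsEigvec ρ (fun p => x s (fun i => p i.1) * y t (fun i => p i.1))

/-- Completeness relation for a square orthonormal family. -/
private lemma onf_complete_s19 {T : Type*} [Fintype T] [DecidableEq T]
    {y : T → T → ℂ} (hy : OrthonormalFam y) (a b : T) :
    ∑ u, star (y u a) * y u b = if a = b then 1 else 0 := by
  classical
  let M : Matrix T T ℂ := Matrix.of fun u i => y u i
  have h1 : M * Mᴴ = 1 := by
    ext j k
    have h := congrArg star (hy j k)
    simp only [star_sum, StarMul.star_mul, star_star, apply_ite (star : ℂ → ℂ),
      star_one, star_zero] at h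
    simpa [M, Matrix.mul_apply, Matrix.one_apply, Matrix.conjTranspose_apply,
      mul_comm, eq_comm] using h
  have h2 : Mᴴ * M = 1 := mul_eq_one_comm.mp h1
  have h3 : (Mᴴ * M) a b = (1 : Matrix T T ℂ) a b := by rw [h2]
  simpa [M, Matrix.mul_apply, Matrix.one_apply, Matrix.conjTranspose_apply] using h3

/-- A product of orthonormal families is an orthonormal family. -/
private lemma onf_pi {ι : Type*} [Fintype ι] [DecidableEq ι] {n : ι → ℕ}
    (v : (i : ι) → Fin (n i) → (Fin (n i) → ℂ)) (hv : ∀ i, OrthonormalFam (v i)) :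
    OrthonormalFam (fun (s r : ∀ i, Fin (n i)) => ∏ i, v i (s i) (r i)) := by
  classical
  intro s s'
  calc ∑ r : ∀ i, Fin (n i), star (∏ i, v i (s i) (r i)) * ∏ i, v i (s' i) (r i)
      = ∑ r : ∀ i, Fin (n i), ∏ i, (star (v i (s i) (r i)) * v i (s' i) (r i)) := by
        apply Finset.sum_congr rfl
        intro r _
        rw [Finset.prod_mul_distrib]
        congr 1
        exact star_prod _ _
    _ = ∏ i, ∑ b, star (v i (s i) b) * v i (s' i) b := by
        rw [Finset.prod_univ_sum, Fintype.piFinset_univ]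
    _ = ∏ i, if s i = s' i then (1:ℂ) else 0 :=
        Finset.prod_congr rfl fun i _ => hv i (s i) (s' i)
    _ = if s = s' then 1 else 0 := by
        rw [Finset.prod_boole]
        simp [funext_iff]

/-- A vector that factorizes across every coordinate with prescribed factors is
proportional to the product vector. -/
private lemma rigid
    (f : (∀ i, Fin (d i)) → ℂ) (a : ∀ i, Fin (d i) → ℂ)
    (hfac : ∀ (i : Fin m) (p p' : ∀ i, Fin (d i)), (∀ j, j ≠ i → p j = p' j) →
      f p * a i (p' i) = f p' * a i (p i))
    (k p : ∀ i, Fin (d i)) :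
    f p * ∏ i, a i (k i) = f k * ∏ i, a i (p i) := by
  classical
  have key : ∀ s : Finset (Fin m),
      f p * ∏ i ∈ s, a i (k i)
        = f (fun i => if i ∈ s then k i else p i) * ∏ i ∈ s, a i (p i) := by
    intro s
    induction s using Finset.induction_on with
    | empty => simp
    | @insert j s hj ih =>
      have hagree : ∀ j', j' ≠ j → (fun i => if i ∈ s then k i else p i) j'
          = (fun i => if i ∈ insert j s then k i else p i) j' := by
        intro j' hne
        simp [Finset.mem_insert, hne]
      have hstep := hfac j (fun i => if i ∈ s then k i else p i)
        (fun i => if i ∈ insert j s then k i else p i) hagree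
      simp only [Finset.mem_insert_self, if_pos, hj, if_neg, if_false] at hstep
      rw [Finset.prod_insert hj, Finset.prod_insert hj]
      calc f p * (a j (k j) * ∏ i ∈ s, a i (k i))
          = (f p * ∏ i ∈ s, a i (k i)) * a j (k j) := by ring
        _ = (f (fun i => if i ∈ s then k i else p i) * a j (k j)) * ∏ i ∈ s, a i (p i) := by
            rw [ih]; ring
        _ = (f (fun i => if i ∈ insert j s then k i else p i) * a j (p j)) * ∏ i ∈ s, a i (p i) := by
            rw [hstep]
        _ = f (fun i => if i ∈ insert j s then k i else p i) * (a j (p j) * ∏ i ∈ s, a i (p i)) := by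
            ring
  have h := key Finset.univ
  simpa using h

/-- If `ρ` has a product eigenbasis across `S | Sᶜ`, then `ρ` maps vectors of the form
`x s0 ⊗ h` to vectors of the form `x s0 ⊗ g`. -/
private lemma expand
    (ρ : Matrix (∀ i, Fin (d i)) (∀ i, Fin (d i)) ℂ) (S : Finset (Fin m))
    (x : ((i : {i // i ∈ S}) → Fin (d i.1)) → ((i : {i // i ∈ S}) → Fin (d i.1)) → ℂ)
    (y : ((i : {i // i ∉ S}) → Fin (d i.1)) → ((i : {i // i ∉ S}) → Fin (d i.1)) → ℂ)
    (hy : OrthonormalFam y)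
    (heig : ∀ s t, IsEigvec ρ (fun p => x s (fun i => p i.1) * y t (fun i => p i.1)))
    (s0 : (i : {i // i ∈ S}) → Fin (d i.1))
    (h : ((i : {i // i ∉ S}) → Fin (d i.1)) → ℂ) :
    ∃ g : ((i : {i // i ∉ S}) → Fin (d i.1)) → ℂ, ρ.mulVec (fun q => x s0 (fun i => q i.1) * h (fun i => q i.1))
      = fun p => x s0 (fun i => p i.1) * g (fun i => p i.1) := by
  classical
  choose e he using heig
  set c : ((i : {i // i ∉ S}) → Fin (d i.1)) → ℂ :=
    fun u => ∑ q', star (y u q') * h q' with hc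
  refine ⟨fun q => ∑ u, (c u * e s0 u) * y u q, ?_⟩
  have hcomp : ∀ b, h b = ∑ u, c u * y u b := by
    intro b
    symm
    calc ∑ u, c u * y u b
        = ∑ u, ∑ q', (star (y u q') * h q') * y u b := by
          simp_rw [hc, Finset.sum_mul]
      _ = ∑ q', ∑ u, (star (y u q') * h q') * y u b := Finset.sum_comm
      _ = ∑ q', (∑ u, star (y u q') * y u b) * h q' := by
          simp_rw [Finset.sum_mul]
          exact Finset.sum_congr rfl fun q' _ => Finset.sum_congr rfl fun u _ => by ring
      _ = ∑ q', (if q' = b then (1:ℂ) else 0) * h q' := by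
          simp_rw [onf_complete_s19 hy]
      _ = h b := by simp
  funext p
  calc ρ.mulVec (fun q => x s0 (fun i => q i.1) * h (fun i => q i.1)) p
      = ∑ q, ρ p q * (x s0 (fun i => q i.1) * h (fun i => q i.1)) := by
        simp [Matrix.mulVec, dotProduct]
    _ = ∑ q, ∑ u, (c u) * (ρ p q * (x s0 (fun i => q i.1) * y u (fun i => q i.1))) := by
        refine Finset.sum_congr rfl fun q _ => ?_
        rw [hcomp (fun i => q i.1), Finset.mul_sum, Finset.mul_sum]
        exact Finset.sum_congr rfl fun u _ => by ring
    _ = ∑ u, (c u) * ∑ q, ρ p q * (x s0 (fun i => q i.1) * y u (fun i => q i.1)) := by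
        rw [Finset.sum_comm]
        simp_rw [Finset.mul_sum]
    _ = ∑ u, (c u) * (e s0 u * (x s0 (fun i => p i.1) * y u (fun i => p i.1))) := by
        refine Finset.sum_congr rfl fun u _ => ?_
        congr 1
        have := congrFun (he s0 u) p
        simpa [Matrix.mulVec, dotProduct] using this
    _ = x s0 (fun i => p i.1) * ∑ u, (c u * e s0 u) * y u (fun i => p i.1) := by
        rw [Finset.mul_sum]
        exact Finset.sum_congr rfl fun u _ => by ring

/-- The spectral theorem gives the one-partite case. -/
private lemma one_partite {d : Fin 1 → ℕ}
    (ρ : Matrix (∀ i, Fin (d i)) (∀ i, Fin (d i)) ℂ)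
    (hρ : ρ.PosSemidef) : HasFullProductEigenbasis ρ := by
  classical
  have hherm := hρ.1
  let B := hherm.eigenvectorBasis
  let eI : (∀ i : Fin 1, Fin (d i)) ≃ Fin (d 0) :=
    { toFun := fun p => p 0
      invFun := fun a i => Fin.cast (congrArg d (Subsingleton.elim 0 i)) a
      left_inv := by
        intro p
        funext i
        have hi : (0 : Fin 1) = i := Subsingleton.elim _ _
        subst hi
        exact Fin.ext rfl
      right_inv := by
        intro a
        exact Fin.ext rfl }
  let ee : ∀ i : Fin 1, Fin (d i) ≃ (∀ j : Fin 1, Fin (d j)) :=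
    fun i => (finCongr (congrArg d (Subsingleton.elim i 0))).trans eI.symm
  have hpoint : ∀ p : ∀ j : Fin 1, Fin (d j), ee 0 (p 0) = p := by
    intro p
    have h1 : (ee 0 (p 0)) = eI.symm (Fin.cast (congrArg d (Subsingleton.elim 0 0)) (p 0)) := rfl
    rw [h1]
    have h2 : Fin.cast (congrArg d (Subsingleton.elim (0:Fin 1) 0)) (p 0) = eI p := Fin.ext rfl
    rw [h2, Equiv.symm_apply_apply]
  have horth := B.orthonormal
  rw [orthonormal_iff_ite] at horth
  have hinner : ∀ j j' : (∀ i : Fin 1, Fin (d i)),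
      ∑ q, star (B j q) * B j' q = if j = j' then 1 else 0 := by
    intro j j'
    have := horth j j'
    rw [PiLp.inner_apply] at this
    simp [RCLike.inner_apply, RCLike.star_def] at this
    rw [← this]
    exact Finset.sum_congr rfl fun _ _ => mul_comm _ _
  refine ⟨fun i k a => B (ee i k) (ee i a), fun i => ?_, fun t => ?_⟩
  · intro j k
    calc ∑ a, star (B (ee i j) (ee i a)) * B (ee i k) (ee i a)
        = ∑ q, star (B (ee i j) q) * B (ee i k) q :=
          Equiv.sum_comp (ee i) (fun q => star (B (ee i j) q) * B (ee i k) q)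
      _ = if ee i j = ee i k then 1 else 0 := hinner _ _
      _ = if j = k then 1 else 0 := by simp [Equiv.apply_eq_iff_eq]
  · have hfun : (fun p : ∀ j : Fin 1, Fin (d j) => ∏ i, B (ee i (t i)) (ee i (p i)))
        = fun p => B (ee 0 (t 0)) p := by
      funext p
      rw [Fin.prod_univ_one]
      rw [hpoint p]
    rw [hfun]
    refine ⟨(hherm.eigenvalues (ee 0 (t 0)) : ℂ), ?_⟩
    have h2 := hherm.mulVec_eigenvectorBasis (ee 0 (t 0))
    rw [show (fun p => B (ee 0 (t 0)) p) = ⇑(B (ee 0 (t 0))) from rfl, h2]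
    funext q
    simp [Pi.smul_apply, Complex.real_smul]
    exact Or.inl rfl

/-- An `m`-partite density matrix has a fully product eigenbasis if and only if it has a
product eigenbasis for every bipartite splitting of `{1,…,m}` into two nonempty subsets. -/
theorem fullProductEigenbasis_iff_all_splittings
    (ρ : Matrix (∀ i, Fin (d i)) (∀ i, Fin (d i)) ℂ)
    (hρ : ρ.PosSemidef) (htr : ρ.trace = 1) :
    HasFullProductEigenbasis ρ ↔
      ∀ S : Finset (Fin m), S.Nonempty → Sᶜ.Nonempty → HasSplitProductEigenbasis S ρ := by
  classical
  constructor
  · rintro ⟨v, hvo, hvE⟩ S _ _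
    refine ⟨fun s r => ∏ i : {i // i ∈ S}, v i.1 (s i) (r i),
            fun t r => ∏ i : {i // i ∉ S}, v i.1 (t i) (r i),
            onf_pi (fun i : {i // i ∈ S} => v i.1) (fun i => hvo i.1),
            onf_pi (fun i : {i // i ∉ S} => v i.1) (fun i => hvo i.1),
            fun s t => ?_⟩
    set u : ∀ i, Fin (d i) := fun i => if h : i ∈ S then s ⟨i, h⟩ else t ⟨i, h⟩ with hu
    have hfun : (fun p : ∀ i, Fin (d i) =>
          (∏ i : {i // i ∈ S}, v i.1 (s i) (p i.1)) *
            ∏ i : {i // i ∉ S}, v i.1 (t i) (p i.1))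
        = fun p => ∏ i, v i (u i) (p i) := by
      funext p
      rw [← Finset.prod_mul_prod_compl S (fun i => v i (u i) (p i))]
      congr 1
      · rw [Finset.prod_subtype S (fun x => Iff.rfl) (fun i => v i (u i) (p i))]
        refine Finset.prod_congr rfl fun i _ => ?_
        have : u i.1 = s i := by
          rw [hu]
          simp only [i.2, dif_pos]
        rw [this]
      · rw [Finset.prod_subtype Sᶜ (fun x => Finset.mem_compl) (fun i => v i (u i) (p i))]
        refine Finset.prod_congr rfl fun i _ => ?_
        have : u i.1 = t i := by
          rw [hu]
          simp only [i.2, dif_neg, not_false_iff]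
        rw [this]
    rw [hfun]
    exact hvE u
  · intro hsplit
    by_cases hm1 : m = 1
    · subst hm1
      exact one_partite ρ hρ
    by_cases hm0 : m = 0
    · subst hm0
      refine ⟨fun i => i.elim0, fun i => i.elim0, fun t => ?_⟩
      have huniq : ∀ p : ∀ i : Fin 0, Fin (d i), p = (fun i => i.elim0) :=
        fun p => funext fun i => i.elim0
      refine ⟨ρ.mulVec (fun _ => 1) (fun i => i.elim0), ?_⟩
      funext p
      rw [huniq p]
      simp [Matrix.mulVec, dotProduct]
    -- now m ≥ 2 : every singleton has nonempty complement
    have hcompl : ∀ i : Fin m, (({i} : Finset (Fin m))ᶜ).Nonempty := by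
      intro i
      have hm2 : 1 < Fintype.card (Fin m) := by
        rw [Fintype.card_fin]
        omega
      obtain ⟨j, hj⟩ := Fintype.exists_ne_of_one_lt_card hm2 i
      exact ⟨j, Finset.mem_compl.mpr (by simp [hj])⟩
    have hsub : ∀ i : Fin m, HasSplitProductEigenbasis {i} ρ :=
      fun i => hsplit {i} (Finset.singleton_nonempty i) (hcompl i)
    choose x y hx hy heig using hsub
    -- transport each `x i` to an orthonormal family on `Fin (d i)`
    let F : ∀ i : Fin m, Fin (d i) → ((j : {j // j ∈ ({i} : Finset (Fin m))}) → Fin (d j.1)) :=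
      fun i a j => Fin.cast (congrArg d (Finset.mem_singleton.mp j.2).symm) a
    have hFrestr : ∀ (i : Fin m) (p : ∀ i, Fin (d i)),
        (fun j : {j // j ∈ ({i} : Finset (Fin m))} => p j.1) = F i (p i) := by
      intro i p
      funext j
      rcases j with ⟨j1, hj1⟩
      have hj : j1 = i := Finset.mem_singleton.mp hj1
      subst hj
      exact Fin.ext rfl
    have hFinj : ∀ i : Fin m, Function.Injective (F i) := by
      intro i a a' hEq
      have := congrFun hEq ⟨i, Finset.mem_singleton_self i⟩
      simpa [F, Fin.ext_iff] using this
    have hFsurj : ∀ i : Fin m, Function.Surjective (F i) := by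
      intro i k
      refine ⟨k ⟨i, Finset.mem_singleton_self i⟩, ?_⟩
      funext j
      have hj : j = ⟨i, Finset.mem_singleton_self i⟩ :=
        Subtype.ext (Finset.mem_singleton.mp j.2)
      rw [hj]
      exact Fin.ext rfl
    have hFbij : ∀ i : Fin m, Function.Bijective (F i) := fun i => ⟨hFinj i, hFsurj i⟩
    set v : ∀ i : Fin m, Fin (d i) → (Fin (d i) → ℂ) :=
      fun i k a => x i (F i k) (F i a) with hv
    have hvo : ∀ i, OrthonormalFam (v i) := by
      intro i j k
      calc ∑ a, star (v i j a) * v i k a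
          = ∑ k', star (x i (F i j) k') * x i (F i k) k' :=
            (hFbij i).sum_comp (fun k' => star (x i (F i j) k') * x i (F i k) k')
        _ = if F i j = F i k then 1 else 0 := hx i (F i j) (F i k)
        _ = if j = k then 1 else 0 := by simp [(hFinj i).eq_iff]
    refine ⟨v, hvo, fun t => ?_⟩
    set w : (∀ i, Fin (d i)) → ℂ := fun p => ∏ i, v i (t i) (p i) with hw
    set f : (∀ i, Fin (d i)) → ℂ := ρ.mulVec w with hf
    -- for each coordinate, f factorizes with factor v i (t i)
    have hfact : ∀ i : Fin m, ∃ g : ((j : {j // j ∉ ({i} : Finset (Fin m))}) → Fin (d j.1)) → ℂ,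
        ∀ p, f p = v i (t i) (p i) * g (fun j => p j.1) := by
      intro i
      have hwdec : w = fun q => x i (F i (t i)) (fun j => q j.1) *
          (fun r : (j : {j // j ∉ ({i} : Finset (Fin m))}) → Fin (d j.1) =>
            ∏ j : {j // j ∉ ({i} : Finset (Fin m))}, v j.1 (t j.1) (r j)) (fun j => q j.1) := by
        funext q
        show (∏ j, v j (t j) (q j)) = _
        rw [hFrestr i q]
        have hsplitprod : (∏ j, v j (t j) (q j))
            = (∏ j ∈ ({i} : Finset (Fin m)), v j (t j) (q j)) *
              ∏ j ∈ ({i} : Finset (Fin m))ᶜ, v j (t j) (q j) :=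
          (Finset.prod_mul_prod_compl _ _).symm
        rw [hsplitprod, Finset.prod_singleton]
        congr 1
        rw [Finset.prod_subtype (({i} : Finset (Fin m))ᶜ) (fun z => Finset.mem_compl)
          (fun j => v j (t j) (q j))]
      rcases expand ρ {i} (x i) (y i) (hy i) (heig i) (F i (t i))
          (fun r => ∏ j : {j // j ∉ ({i} : Finset (Fin m))}, v j.1 (t j.1) (r j)) with ⟨g, hg⟩
      refine ⟨g, fun p => ?_⟩
      have := congrFun hg p
      rw [← hwdec] at this
      rw [hf, this, hFrestr i p]
    choose g hgfac using hfact
    -- pairwise exchange relation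
    have hfac : ∀ (i : Fin m) (p p' : ∀ i, Fin (d i)), (∀ j, j ≠ i → p j = p' j) →
        f p * v i (t i) (p' i) = f p' * v i (t i) (p i) := by
      intro i p p' hagree
      have hrestr : (fun j : {j // j ∉ ({i} : Finset (Fin m))} => p j.1)
          = (fun j : {j // j ∉ ({i} : Finset (Fin m))} => p' j.1) := by
        funext j
        exact hagree j.1 (fun hji => j.2 (Finset.mem_singleton.mpr hji))
      rw [hgfac i p, hgfac i p', hrestr]
      ring
    -- each factor is nonzero somewhere
    have hnz : ∀ i, ∃ b, v i (t i) b ≠ 0 := by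
      intro i
      by_contra hc
      push_neg at hc
      have h1 := hvo i (t i) (t i)
      simp [hc] at h1
    choose k hk using hnz
    have hD : (∏ i, v i (t i) (k i)) ≠ 0 :=
      Finset.prod_ne_zero_iff.mpr fun i _ => hk i
    refine ⟨f k / ∏ i, v i (t i) (k i), ?_⟩
    funext p
    have hr := rigid f (fun i => v i (t i)) hfac k p
    show f p = (f k / ∏ i, v i (t i) (k i)) * w p
    rw [hw]
    field_simp
    rw [mul_comm (f p) _]
    rw [← hr]
    ring
end
end
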